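/- arXiv:2407.02739 — 8 statements merged into one kernel-verified Lean document; each statement's English description precedes it below -/
import Mathlib

section
/- Let H = ⟨g₁, …, gₙ⟩ ≤ G be a finitely generated subgroup, and suppose g₁ has maximal length among the generators, i.e. l(g₁) = max_{j=1,…,n} l(g_j). Then H is conjugate in G to a subgroup of A or of B if and only if each of the generators g₁, …, gₙ is a bounded element and each product g₁·g_j for j = 2, …, n is a bounded element. -/
/-!
An element is bounded iff it is conjugate into a factor: a cyclically reduced word of length
at least 2 has unbounded powers, and otherwise conjugating by the first letter shortens it.
Choosing the conjugator of minimal length, a bounded `g ∉ A ∩ B` has a reduced expression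
`u c u⁻¹` with a single middle letter `c`.

Write `g₁ = u c₀ u⁻¹` in this way and let `h = v c v⁻¹` be another generator; maximality of
`l(g₁)` gives `|v| ≤ |u|`. Compare the first letters `z` of `u` and `y` of `v`. If
`z⁻¹ y ∈ A ∩ B`, conjugating by `z` shortens both `u` and `v`. Otherwise `u⁻¹ v` has a reduced
expression `s` for which `c₀ s c` is reduced, and `u⁻¹ (g₁ h) u = c₀ s c s⁻¹` is conjugate to a
cyclically reduced word, so `g₁ h` is unbounded. Once `u` is used up, `u⁻¹ h u` lies in the
factor of `c₀`; hence so does `u⁻¹ H u`.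
-/

variable {G : Type*} [Group G]

/-- A reduced expression with respect to the factors `A` and `B`: every letter lies in
`(A ∪ B) \ (A ∩ B)` and consecutive letters lie in different factors. -/
def IsReducedWord (A B : Subgroup G) (w : List G) : Prop :=
  (∀ x ∈ w, (x ∈ A ∨ x ∈ B) ∧ ¬(x ∈ A ∧ x ∈ B)) ∧
    w.Chain' fun x y => ¬(x ∈ A ∧ y ∈ A) ∧ ¬(x ∈ B ∧ y ∈ B)

/-- `G` is the internal amalgamated free product of its subgroups `A` and `B` over `A ⊓ B`:
`A` and `B` generate `G` and no reduced word of length at least `2` represents the identity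
(this is the classical characterization of the canonical map from the abstract amalgamated
free product onto `G` being an isomorphism). -/
def IsAmalgamatedProduct (A B : Subgroup G) : Prop :=
  A ⊔ B = ⊤ ∧ ∀ w : List G, IsReducedWord A B w → 2 ≤ w.length → w.prod ≠ 1

/-- The length `l(g)` of an element: the (common) number of letters of a reduced expression
of `g`; it is `0` for elements of `A ⊓ B` (which admit no reduced expression). -/
noncomputable def amalgLen (A B : Subgroup G) (g : G) : ℕ :=
  sInf {r | ∃ w : List G, IsReducedWord A B w ∧ w.prod = g ∧ w.length = r}

/-- A subgroup `H` is bounded if the lengths of its elements are bounded. -/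
def BoundedSubgroup (A B : Subgroup G) (H : Subgroup G) : Prop :=
  ∃ N : ℕ, ∀ h ∈ H, amalgLen A B h ≤ N

/-- An element is bounded if the cyclic subgroup it generates is bounded. -/
def BoundedElement (A B : Subgroup G) (g : G) : Prop :=
  BoundedSubgroup A B (Subgroup.zpowers g)

section Words

variable (A B : Subgroup G)

def IsLetter (x : G) : Prop := (x ∈ A ∨ x ∈ B) ∧ x ∉ A ⊓ B

def Alternates (x y : G) : Prop := ¬(x ∈ A ∧ y ∈ A) ∧ ¬(x ∈ B ∧ y ∈ B)

def SameFactors (x y : G) : Prop := (x ∈ A ↔ y ∈ A) ∧ (x ∈ B ↔ y ∈ B)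

variable {A B}

theorem not_alternates_iff {x y : G} :
    ¬Alternates A B x y ↔ (x ∈ A ∧ y ∈ A) ∨ (x ∈ B ∧ y ∈ B) := by
  unfold Alternates
  tauto

theorem Alternates.symm {x y : G} (h : Alternates A B x y) : Alternates A B y x :=
  ⟨fun h' => h.1 h'.symm, fun h' => h.2 h'.symm⟩

theorem mem_left_of_not_alternates {x y : G} (h : ¬Alternates A B x y) (hx : x ∉ B) :
    y ∈ A := by
  rw [not_alternates_iff] at h
  tauto

theorem mem_right_of_not_alternates {x y : G} (h : ¬Alternates A B x y) (hx : x ∉ A) :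
    y ∈ B := by
  rw [not_alternates_iff] at h
  tauto

theorem mul_mem_of_not_alternates {x y : G} (h : ¬Alternates A B x y) :
    x * y ∈ A ∨ x * y ∈ B :=
  (not_alternates_iff.1 h).imp (fun ⟨hx, hy⟩ => mul_mem hx hy) (fun ⟨hx, hy⟩ => mul_mem hx hy)

theorem conj_mem_of_not_alternates {x y : G} (h : ¬Alternates A B x y) :
    x⁻¹ * y * x ∈ A ∨ x⁻¹ * y * x ∈ B :=
  (not_alternates_iff.1 h).imp (fun ⟨hx, hy⟩ => mul_mem (mul_mem (inv_mem hx) hy) hx)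
    (fun ⟨hx, hy⟩ => mul_mem (mul_mem (inv_mem hx) hy) hx)

theorem not_mem_inf_of_alternates {x y : G} (hx : x ∈ A ∨ x ∈ B)
    (h : Alternates A B x y) : y ∉ A ⊓ B := fun hy => by
  rcases hx with hx | hx
  exacts [h.1 ⟨hx, hy.1⟩, h.2 ⟨hx, hy.2⟩]

namespace SameFactors

theorem refl (x : G) : SameFactors A B x x := ⟨Iff.rfl, Iff.rfl⟩

theorem symm {x y : G} (h : SameFactors A B x y) : SameFactors A B y x :=
  ⟨h.1.symm, h.2.symm⟩

theorem trans {x y z : G} (h : SameFactors A B x y) (h' : SameFactors A B y z) :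
    SameFactors A B x z :=
  ⟨h.1.trans h'.1, h.2.trans h'.2⟩

theorem isLetter {x y : G} (h : SameFactors A B x y) (hx : IsLetter A B x) :
    IsLetter A B y := by
  obtain ⟨h1, h2⟩ := h
  simp only [IsLetter, Subgroup.mem_inf] at *
  tauto

theorem alternates_left {x x' y : G} (h : SameFactors A B x x') (hxy : Alternates A B x y) :
    Alternates A B x' y := by
  obtain ⟨h1, h2⟩ := h
  unfold Alternates at *
  tauto

theorem alternates_right {x y y' : G} (h : SameFactors A B y y') (hxy : Alternates A B x y) :
    Alternates A B x y' :=
  (h.alternates_left hxy.symm).symm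

end SameFactors

theorem sameFactors_inv (x : G) : SameFactors A B x x⁻¹ :=
  ⟨inv_mem_iff.symm, inv_mem_iff.symm⟩

theorem sameFactors_mul_inf (x : G) {k : G} (hk : k ∈ A ⊓ B) :
    SameFactors A B x (x * k) :=
  ⟨(A.mul_mem_cancel_right hk.1).symm, (B.mul_mem_cancel_right hk.2).symm⟩

theorem sameFactors_inf_mul (x : G) {k : G} (hk : k ∈ A ⊓ B) :
    SameFactors A B x (k * x) :=
  ⟨(A.mul_mem_cancel_left hk.1).symm, (B.mul_mem_cancel_left hk.2).symm⟩

theorem sameFactors_mul_left {x y : G} (hx : IsLetter A B x) (hxy : ¬Alternates A B x y)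
    (hC : x * y ∉ A ⊓ B) : SameFactors A B x (x * y) := by
  obtain ⟨-, hx⟩ := hx
  simp only [Subgroup.mem_inf] at hx hC
  rcases not_alternates_iff.1 hxy with ⟨h1, h2⟩ | ⟨h1, h2⟩
  · exact ⟨iff_of_true h1 (mul_mem h1 h2), iff_of_false (hx ⟨h1, ·⟩) (hC ⟨mul_mem h1 h2, ·⟩)⟩
  · exact ⟨iff_of_false (hx ⟨·, h1⟩) (hC ⟨·, mul_mem h1 h2⟩), iff_of_true h1 (mul_mem h1 h2)⟩

theorem sameFactors_mul_right {x y : G} (hy : IsLetter A B y) (hxy : ¬Alternates A B x y)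
    (hC : x * y ∉ A ⊓ B) : SameFactors A B y (x * y) := by
  obtain ⟨-, hy⟩ := hy
  simp only [Subgroup.mem_inf] at hy hC
  rcases not_alternates_iff.1 hxy with ⟨h1, h2⟩ | ⟨h1, h2⟩
  · exact ⟨iff_of_true h2 (mul_mem h1 h2), iff_of_false (hy ⟨h2, ·⟩) (hC ⟨mul_mem h1 h2, ·⟩)⟩
  · exact ⟨iff_of_false (hy ⟨·, h2⟩) (hC ⟨·, mul_mem h1 h2⟩), iff_of_true h2 (mul_mem h1 h2)⟩

end Words

section ReducedWords

def invWord (w : List G) : List G := (w.map (·⁻¹)).reverse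

def conjWord (u : List G) (c : G) : List G := u ++ [c] ++ invWord u

@[simp] theorem invWord_nil : invWord ([] : List G) = [] := rfl

@[simp] theorem invWord_cons (x : G) (w : List G) : invWord (x :: w) = invWord w ++ [x⁻¹] := by
  simp [invWord]

@[simp] theorem invWord_concat (w : List G) (x : G) :
    invWord (w ++ [x]) = x⁻¹ :: invWord w := by
  simp [invWord]

@[simp] theorem invWord_invWord (w : List G) : invWord (invWord w) = w := by
  simp [invWord, List.map_reverse]

@[simp] theorem length_invWord (w : List G) : (invWord w).length = w.length := by
  simp [invWord]

@[simp] theorem prod_invWord (w : List G) : (invWord w).prod = w.prod⁻¹ :=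
  (List.prod_inv_reverse w).symm

theorem conjWord_cons (z : G) (u : List G) (c : G) :
    conjWord (z :: u) c = z :: (conjWord u c ++ [z⁻¹]) := by
  simp [conjWord]

@[simp] theorem conjWord_nil (c : G) : conjWord [] c = [c] := rfl

@[simp] theorem prod_conjWord (u : List G) (c : G) :
    (conjWord u c).prod = u.prod * c * u.prod⁻¹ := by
  simp [conjWord, mul_assoc]

@[simp] theorem length_conjWord (u : List G) (c : G) :
    (conjWord u c).length = 2 * u.length + 1 := by
  simp [conjWord]
  ring

variable {A B : Subgroup G}

theorem isReducedWord_iff {w : List G} :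
    IsReducedWord A B w ↔ (∀ x ∈ w, IsLetter A B x) ∧ w.IsChain (Alternates A B) :=
  Iff.rfl

theorem isReducedWord_nil : IsReducedWord A B ([] : List G) := ⟨by simp, List.isChain_nil⟩

theorem isReducedWord_singleton {x : G} : IsReducedWord A B [x] ↔ IsLetter A B x := by
  simp [isReducedWord_iff]

theorem isReducedWord_cons {x : G} {w : List G} :
    IsReducedWord A B (x :: w) ↔
      IsLetter A B x ∧ IsReducedWord A B w ∧ ∀ y ∈ w.head?, Alternates A B x y := by
  simp only [isReducedWord_iff, List.isChain_cons, List.forall_mem_cons]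
  tauto

theorem isReducedWord_append {u w : List G} :
    IsReducedWord A B (u ++ w) ↔ IsReducedWord A B u ∧ IsReducedWord A B w ∧
      ∀ x ∈ u.getLast?, ∀ y ∈ w.head?, Alternates A B x y := by
  simp only [isReducedWord_iff, List.isChain_append, List.forall_mem_append]
  tauto

namespace IsReducedWord

theorem of_append_left {u w : List G} (h : IsReducedWord A B (u ++ w)) : IsReducedWord A B u :=
  (isReducedWord_append.1 h).1

theorem of_append_right {u w : List G} (h : IsReducedWord A B (u ++ w)) :
    IsReducedWord A B w :=
  (isReducedWord_append.1 h).2.1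

theorem of_cons {x : G} {w : List G} (h : IsReducedWord A B (x :: w)) : IsReducedWord A B w :=
  (isReducedWord_cons.1 h).2.1

theorem isLetter {w : List G} (h : IsReducedWord A B w) {x : G} (hx : x ∈ w) :
    IsLetter A B x :=
  (isReducedWord_iff.1 h).1 x hx

theorem glue {u w : List G} {x : G} (hu : IsReducedWord A B (u ++ [x]))
    (hw : IsReducedWord A B (x :: w)) : IsReducedWord A B (u ++ x :: w) := by
  obtain ⟨hu, -, hux⟩ := isReducedWord_append.1 hu
  exact isReducedWord_append.2 ⟨hu, hw, fun a ha b hb => hux a ha b (by simpa using hb)⟩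

theorem append_cons_cons {u w : List G} {x y : G} (hu : IsReducedWord A B (u ++ [x]))
    (hw : IsReducedWord A B (y :: w)) (hxy : Alternates A B x y) :
    IsReducedWord A B (u ++ x :: y :: w) :=
  hu.glue (isReducedWord_cons.2 ⟨hu.isLetter (by simp), hw, by simpa using hxy⟩)

theorem replace_head {w : List G} {x y : G} (h : IsReducedWord A B (x :: w))
    (hxy : SameFactors A B x y) : IsReducedWord A B (y :: w) := by
  obtain ⟨hx, hw, hxw⟩ := isReducedWord_cons.1 h
  exact isReducedWord_cons.2 ⟨hxy.isLetter hx, hw, fun z hz => hxy.alternates_left (hxw z hz)⟩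

theorem invWord {w : List G} (h : IsReducedWord A B w) : IsReducedWord A B (invWord w) := by
  induction w with
  | nil => exact isReducedWord_nil
  | cons x w ih =>
    obtain ⟨hx, hw, hxw⟩ := isReducedWord_cons.1 h
    rw [invWord_cons]
    refine isReducedWord_append.2 ⟨ih hw, isReducedWord_singleton.2
      ((sameFactors_inv x).isLetter hx), fun a ha b hb => ?_⟩
    rcases w with _ | ⟨y, w⟩
    · simp at ha
    · simp only [invWord_cons, List.getLast?_append, List.getLast?_singleton,
        Option.some_or, Option.mem_def, Option.some.injEq, List.head?_cons] at ha hb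
      subst ha hb
      exact ((sameFactors_inv x).alternates_right
        ((sameFactors_inv y).alternates_left (hxw y rfl).symm))

theorem replace_last {w : List G} {x y : G} (h : IsReducedWord A B (w ++ [x]))
    (hxy : SameFactors A B x y) : IsReducedWord A B (w ++ [y]) := by
  have h' := h.invWord
  rw [invWord_concat] at h'
  simpa using (h'.replace_head
    (((sameFactors_inv x).symm.trans hxy).trans (sameFactors_inv y))).invWord

theorem conjWord {u : List G} {c : G} (h : IsReducedWord A B (u ++ [c])) :
    IsReducedWord A B (conjWord u c) := by
  have hc := h.invWord
  rw [invWord_concat] at hc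
  simpa [_root_.conjWord] using h.glue (hc.replace_head (sameFactors_inv c).symm)

end IsReducedWord

end ReducedWords

section NormalForm

variable {A B : Subgroup G}

theorem amalgLen_le {w : List G} (hw : IsReducedWord A B w) : amalgLen A B w.prod ≤ w.length :=
  Nat.sInf_le ⟨w, hw, rfl, rfl⟩

theorem IsReducedWord.merge {u w : List G} {x y : G} (hu : IsReducedWord A B (u ++ [x]))
    (hw : IsReducedWord A B (y :: w)) (hxy : ¬Alternates A B x y) (hC : x * y ∉ A ⊓ B) :
    IsReducedWord A B (u ++ (x * y) :: w) :=
  (hu.replace_last (sameFactors_mul_left (hu.isLetter (by simp)) hxy hC)).glue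
    (hw.replace_head (sameFactors_mul_right (hw.isLetter (by simp)) hxy hC))

theorem exists_isReducedWord_mul {x : G} (hx : x ∈ A ∨ x ∈ B) {w : List G}
    (hw : IsReducedWord A B w) :
    x * w.prod ∈ A ⊓ B ∨
      ∃ w', IsReducedWord A B w' ∧ w'.prod = x * w.prod ∧ w'.length ≤ w.length + 1 := by
  rcases w with _ | ⟨y, w⟩
  · by_cases hC : x ∈ A ⊓ B
    · exact Or.inl (by simpa using hC)
    · exact Or.inr ⟨[x], isReducedWord_singleton.2 ⟨hx, hC⟩, by simp, by simp⟩
  obtain ⟨hy, hw', -⟩ := isReducedWord_cons.1 hw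
  by_cases hxy : Alternates A B x y
  · refine Or.inr ⟨x :: y :: w, isReducedWord_cons.2 ⟨⟨hx, ?_⟩, hw, by simpa using hxy⟩,
      by simp, by simp⟩
    exact not_mem_inf_of_alternates hy.1 hxy.symm
  by_cases hC : x * y ∈ A ⊓ B
  · rcases w with _ | ⟨y', w⟩
    · exact Or.inl (by simpa using hC)
    · exact Or.inr ⟨(x * y * y') :: w, hw'.replace_head (sameFactors_inf_mul y' hC),
        by simp [mul_assoc], by simp⟩
  · exact Or.inr ⟨(x * y) :: w, hw.replace_head (sameFactors_mul_right hy hxy hC),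
      by simp [mul_assoc], by simp⟩

namespace IsAmalgamatedProduct

theorem prod_ne_one (hG : IsAmalgamatedProduct A B) {w : List G} (hw : IsReducedWord A B w)
    (hne : w ≠ []) : w.prod ≠ 1 := by
  rcases w with _ | ⟨x, _ | ⟨y, w⟩⟩
  · exact absurd rfl hne
  · rw [List.prod_singleton]
    rintro rfl
    exact (hw.isLetter (by simp)).2 (one_mem _)
  · exact hG.2 _ hw (by simp)

theorem eq_nil_of_prod_mem_inf (hG : IsAmalgamatedProduct A B) {w : List G}
    (hw : IsReducedWord A B w) (hC : w.prod ∈ A ⊓ B) : w = [] := by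
  rcases List.eq_nil_or_concat' w with rfl | ⟨t, z, rfl⟩
  · rfl
  refine absurd ?_ (hG.prod_ne_one (hw.replace_last (sameFactors_mul_inf z (inv_mem hC)))
    (by simp))
  simp only [List.prod_append, List.prod_singleton]
  group

theorem exists_isReducedWord_or_mem_inf (hG : IsAmalgamatedProduct A B) (g : G) :
    g ∈ A ⊓ B ∨ ∃ w, IsReducedWord A B w ∧ w.prod = g := by
  have step : ∀ x ∈ (A : Set G) ∪ B, ∀ y : G, (y ∈ A ⊓ B ∨ ∃ w, IsReducedWord A B w ∧ w.prod = y) →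
      x * y ∈ A ⊓ B ∨ ∃ w, IsReducedWord A B w ∧ w.prod = x * y := by
    rintro x hx y (hy | ⟨w, hw, rfl⟩)
    · have hxy : x * y ∈ A ∨ x * y ∈ B := hx.imp (mul_mem · hy.1) (mul_mem · hy.2)
      have := exists_isReducedWord_mul hxy (isReducedWord_nil (A := A) (B := B))
      rw [List.prod_nil, mul_one] at this
      exact this.imp_right fun ⟨w', hw', hp, _⟩ => ⟨w', hw', hp⟩
    · exact (exists_isReducedWord_mul hx hw).imp_right fun ⟨w', hw', hp, _⟩ => ⟨w', hw', hp⟩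
  have hg : g ∈ Subgroup.closure ((A : Set G) ∪ B) := by
    rw [Subgroup.closure_union, A.closure_eq, B.closure_eq, hG.1]
    trivial
  induction hg using Subgroup.closure_induction_left with
  | one => exact Or.inl (one_mem _)
  | mul_left x hx y _ ih => exact step x hx y ih
  | inv_mul_cancel x hx y _ ih => exact step x⁻¹ (hx.imp inv_mem inv_mem) y ih

theorem length_eq_of_prod_mul_prod_eq_one (hG : IsAmalgamatedProduct A B) {u v : List G}
    (hu : IsReducedWord A B u) (hv : IsReducedWord A B v) (h : u.prod * v.prod = 1) :
    u.length = v.length := by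
  induction hn : u.length + v.length using Nat.strong_induction_on generalizing u v with
  | _ n ih =>
  rcases List.eq_nil_or_concat' u with rfl | ⟨u, x, rfl⟩
  · rw [List.prod_nil, one_mul] at h
    simp [hG.eq_nil_of_prod_mem_inf hv (h ▸ one_mem _)]
  rcases v with _ | ⟨y, v⟩
  · exact absurd (by simpa using h) (hG.prod_ne_one hu (by simp))
  have hxy : ¬Alternates A B x y := fun hxy => by
    refine hG.prod_ne_one (w := u ++ [x] ++ y :: v) ?_ (by simp) (by simpa [mul_assoc] using h)
    exact isReducedWord_append.2 ⟨hu, hv, by simpa using hxy⟩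
  have hC : x * y ∈ A ⊓ B := by
    by_contra hC
    exact hG.prod_ne_one (hu.merge hv hxy hC) (by simp) (by simpa [mul_assoc] using h)
  rcases List.eq_nil_or_concat' u with rfl | ⟨u, x', rfl⟩
  · have hv' : v.prod ∈ A ⊓ B := by
      have h' : x * y * v.prod = 1 := by simpa [mul_assoc] using h
      rw [eq_inv_of_mul_eq_one_right h']
      exact inv_mem hC
    simp [hG.eq_nil_of_prod_mem_inf hv.of_cons hv']
  · have hu' := hu.of_append_left.replace_last (sameFactors_mul_inf x' hC)
    have := ih _ (by simp at hn ⊢; omega) hu' hv.of_cons (by simpa [mul_assoc] using h) rfl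
    simpa using this

theorem amalgLen_eq (hG : IsAmalgamatedProduct A B) {w : List G} (hw : IsReducedWord A B w) :
    amalgLen A B w.prod = w.length := by
  obtain ⟨w', hw', hp, hl⟩ := Nat.sInf_mem (s := {r | ∃ w' : List G, IsReducedWord A B w' ∧
    w'.prod = w.prod ∧ w'.length = r}) ⟨_, w, hw, rfl, rfl⟩
  rw [amalgLen, ← hl, ← length_invWord w]
  exact hG.length_eq_of_prod_mul_prod_eq_one hw' hw.invWord (by simp [hp])

theorem amalgLen_of_mem_inf (hG : IsAmalgamatedProduct A B) {g : G} (hg : g ∈ A ⊓ B) :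
    amalgLen A B g = 0 := by
  rcases Set.eq_empty_or_nonempty
      {r | ∃ w : List G, IsReducedWord A B w ∧ w.prod = g ∧ w.length = r} with
    h | ⟨_, w, hw, rfl, -⟩
  · simp [amalgLen, h]
  · simpa [hG.eq_nil_of_prod_mem_inf hw hg] using amalgLen_le hw

theorem amalgLen_le_one (hG : IsAmalgamatedProduct A B) {x : G} (hx : x ∈ A ∨ x ∈ B) :
    amalgLen A B x ≤ 1 := by
  by_cases hC : x ∈ A ⊓ B
  · simp [hG.amalgLen_of_mem_inf hC]
  · simpa using amalgLen_le (isReducedWord_singleton.2 ⟨hx, hC⟩)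

theorem amalgLen_mul_le_succ (hG : IsAmalgamatedProduct A B) {x : G} (hx : x ∈ A ∨ x ∈ B)
    (g : G) : amalgLen A B (x * g) ≤ amalgLen A B g + 1 := by
  rcases hG.exists_isReducedWord_or_mem_inf g with hg | ⟨w, hw, rfl⟩
  · exact (hG.amalgLen_le_one (hx.imp (mul_mem · hg.1) (mul_mem · hg.2))).trans (by omega)
  rcases exists_isReducedWord_mul hx hw with h | ⟨w', hw', hp, hl⟩
  · simp [hG.amalgLen_of_mem_inf h]
  · rw [hG.amalgLen_eq hw, ← hp]
    exact (amalgLen_le hw').trans hl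

theorem amalgLen_mul_le_of_mem_inf (hG : IsAmalgamatedProduct A B) {k : G} (hk : k ∈ A ⊓ B)
    (g : G) : amalgLen A B (k * g) ≤ amalgLen A B g := by
  rcases hG.exists_isReducedWord_or_mem_inf g with hg | ⟨_ | ⟨y, w⟩, hw, rfl⟩
  · simp [hG.amalgLen_of_mem_inf (mul_mem hk hg)]
  · simp [hG.amalgLen_of_mem_inf hk]
  · rw [hG.amalgLen_eq hw]
    simpa [mul_assoc] using amalgLen_le (hw.replace_head (sameFactors_inf_mul y hk))

theorem amalgLen_mul_le (hG : IsAmalgamatedProduct A B) (g h : G) :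
    amalgLen A B (g * h) ≤ amalgLen A B g + amalgLen A B h := by
  rcases hG.exists_isReducedWord_or_mem_inf g with hg | ⟨w, hw, rfl⟩
  · exact (hG.amalgLen_mul_le_of_mem_inf hg h).trans (Nat.le_add_left _ _)
  rw [hG.amalgLen_eq hw]
  induction w with
  | nil => simp
  | cons x w ih =>
    calc amalgLen A B (x * w.prod * h) = amalgLen A B (x * (w.prod * h)) := by rw [mul_assoc]
      _ ≤ amalgLen A B (w.prod * h) + 1 :=
        hG.amalgLen_mul_le_succ (hw.isLetter (List.mem_cons_self ..)).1 _
      _ ≤ (x :: w).length + amalgLen A B h := by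
        have := ih hw.of_cons
        simp only [List.length_cons]
        omega

end IsAmalgamatedProduct

end NormalForm

section Bounded

variable {A B : Subgroup G}

theorem BoundedElement.mul_self {g : G} (h : BoundedElement A B g) :
    BoundedElement A B (g * g) := by
  obtain ⟨N, hN⟩ := h
  refine ⟨N, fun y hy => hN y (Subgroup.zpowers_le.2 ?_ hy)⟩
  exact mul_mem (Subgroup.mem_zpowers g) (Subgroup.mem_zpowers g)

theorem conj_mem_of_mem_closure {S : Subgroup G} {s : Set G} {x h : G}
    (hs : ∀ g ∈ s, x⁻¹ * g * x ∈ S) (hh : h ∈ Subgroup.closure s) : x⁻¹ * h * x ∈ S := by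
  have : Subgroup.closure s ≤ S.comap (MulAut.conj x⁻¹).toMonoidHom :=
    (Subgroup.closure_le _).2 fun g hg => by simpa using hs g hg
  simpa using this hh

namespace IsAmalgamatedProduct

theorem mem_inf_of_amalgLen_eq_zero (hG : IsAmalgamatedProduct A B) {g : G}
    (hg : amalgLen A B g = 0) : g ∈ A ⊓ B := by
  rcases hG.exists_isReducedWord_or_mem_inf g with hC | ⟨w, hw, rfl⟩
  · exact hC
  · rw [hG.amalgLen_eq hw, List.length_eq_zero_iff] at hg
    simp [hg, one_mem]

theorem mem_or_mem_of_amalgLen_le_one (hG : IsAmalgamatedProduct A B) {g : G}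
    (hg : amalgLen A B g ≤ 1) : g ∈ A ∨ g ∈ B := by
  rcases hG.exists_isReducedWord_or_mem_inf g with hC | ⟨_ | ⟨x, _ | ⟨_, w⟩⟩, hw, rfl⟩
  · exact Or.inl hC.1
  · exact Or.inl (one_mem A)
  · simpa using (hw.isLetter (List.mem_singleton_self x)).1
  · rw [hG.amalgLen_eq hw] at hg
    simp at hg

theorem amalgLen_conj_le_of_mem_inf (hG : IsAmalgamatedProduct A B) {k : G} (hk : k ∈ A ⊓ B)
    (g : G) : amalgLen A B (k * g * k⁻¹) ≤ amalgLen A B g :=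
  calc amalgLen A B (k * g * k⁻¹) ≤ amalgLen A B (k * g) + amalgLen A B k⁻¹ :=
        hG.amalgLen_mul_le _ _
    _ ≤ amalgLen A B g := by
        rw [hG.amalgLen_of_mem_inf (inv_mem hk), add_zero]
        exact hG.amalgLen_mul_le_of_mem_inf hk g

theorem boundedElement_of_mem (hG : IsAmalgamatedProduct A B) {g : G} (hg : g ∈ A ∨ g ∈ B) :
    BoundedElement A B g :=
  ⟨1, fun _ hy => hG.amalgLen_le_one (hg.imp (Subgroup.zpowers_le.2 · hy)
    (Subgroup.zpowers_le.2 · hy))⟩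

theorem boundedElement_conj (hG : IsAmalgamatedProduct A B) {g : G} (hg : BoundedElement A B g)
    (x : G) : BoundedElement A B (x⁻¹ * g * x) := by
  obtain ⟨N, hN⟩ := hg
  refine ⟨amalgLen A B x⁻¹ + N + amalgLen A B x, ?_⟩
  rintro _ ⟨k, rfl⟩
  have hk : (x⁻¹ * g * x) ^ k = x⁻¹ * g ^ k * x := by
    simpa using conj_zpow (a := x⁻¹) (b := g) (i := k)
  dsimp only
  rw [hk]
  calc amalgLen A B (x⁻¹ * g ^ k * x)
      ≤ amalgLen A B x⁻¹ + amalgLen A B (g ^ k) + amalgLen A B x :=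
        (hG.amalgLen_mul_le _ _).trans (by gcongr; exact hG.amalgLen_mul_le _ _)
    _ ≤ amalgLen A B x⁻¹ + N + amalgLen A B x := by gcongr; exact hN _ ⟨k, rfl⟩

theorem boundedElement_conj_iff (hG : IsAmalgamatedProduct A B) (x g : G) :
    BoundedElement A B (x⁻¹ * g * x) ↔ BoundedElement A B g :=
  ⟨fun h => by simpa [mul_assoc] using hG.boundedElement_conj h x⁻¹,
    fun h => hG.boundedElement_conj h x⟩

theorem not_boundedElement_of_cyclic (hG : IsAmalgamatedProduct A B) {x y : G} {t : List G}
    (hw : IsReducedWord A B (x :: (t ++ [y]))) (hyx : Alternates A B y x) :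
    ¬BoundedElement A B (x :: (t ++ [y])).prod := by
  set W := x :: (t ++ [y])
  have hpow : ∀ n : ℕ, ∃ s : List G, IsReducedWord A B (x :: (s ++ [y])) ∧
      (x :: (s ++ [y])).prod = W.prod ^ (n + 1) ∧
      (x :: (s ++ [y])).length = (n + 1) * W.length := by
    intro n
    induction n with
    | zero => exact ⟨t, hw, by simp [W], by simp [W]⟩
    | succ n ih =>
      obtain ⟨s, hs, hp, hl⟩ := ih
      have hprod : (x :: ((t ++ [y] ++ x :: s) ++ [y])).prod = W.prod * (x :: (s ++ [y])).prod := by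
        simp [W, mul_assoc]
      have hlen : (x :: ((t ++ [y] ++ x :: s) ++ [y])).length =
          W.length + (x :: (s ++ [y])).length := by
        simp [W]
        omega
      refine ⟨t ++ [y] ++ x :: s, ?_, by rw [hprod, hp, ← pow_succ'], by rw [hlen, hl]; ring⟩
      simpa using IsReducedWord.append_cons_cons (u := x :: t) hw hs hyx
  rintro ⟨N, hN⟩
  obtain ⟨s, hs, hp, hl⟩ := hpow N
  have hbound := hN _ (hp ▸ Subgroup.npow_mem_zpowers _ _)
  rw [hG.amalgLen_eq hs, hl] at hbound
  have hW : 2 ≤ W.length := by simp [W]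
  nlinarith

theorem not_boundedElement_of_isReducedWord_cons (hG : IsAmalgamatedProduct A B) {c d : G}
    {s : List G} (h : IsReducedWord A B (c :: (s ++ [d]))) :
    ¬BoundedElement A B (c * (s.prod * d * s.prod⁻¹)) := by
  obtain ⟨hc, hsd, hcs⟩ := isReducedWord_cons.1 h
  rcases s with _ | ⟨a, s⟩
  · simpa using hG.not_boundedElement_of_cyclic (t := []) h (hcs d (by simp)).symm
  have hca : Alternates A B c a := hcs a (by simp)
  have hw : IsReducedWord A B (c :: conjWord (a :: s) d) :=
    isReducedWord_cons.2 ⟨hc, hsd.conjWord, by simpa [conjWord] using hca⟩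
  rw [conjWord_cons] at hw
  convert hG.not_boundedElement_of_cyclic (t := a :: conjWord s d) hw
    ((sameFactors_inv a).alternates_left hca.symm) using 2
  simp only [List.prod_cons, List.prod_append, prod_conjWord, List.prod_nil, mul_one]
  group

theorem exists_conj_mem_of_boundedElement (hG : IsAmalgamatedProduct A B) {g : G}
    (hg : BoundedElement A B g) : ∃ x, x⁻¹ * g * x ∈ A ∨ x⁻¹ * g * x ∈ B := by
  induction hn : amalgLen A B g using Nat.strong_induction_on generalizing g with
  | _ n ih =>
  have hfactor : g ∈ A ∨ g ∈ B → ∃ x, x⁻¹ * g * x ∈ A ∨ x⁻¹ * g * x ∈ B :=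
    fun h => ⟨1, by simpa using h⟩
  rcases hG.exists_isReducedWord_or_mem_inf g with hC | ⟨_ | ⟨z, w⟩, hw, rfl⟩
  · exact hfactor (Or.inl hC.1)
  · exact hfactor (Or.inl (one_mem A))
  rcases List.eq_nil_or_concat' w with rfl | ⟨t, y, rfl⟩
  · exact hfactor (by simpa using (hw.isLetter (List.mem_singleton_self z)).1)
  have hyz : ¬Alternates A B y z := fun h => hG.not_boundedElement_of_cyclic hw h hg
  have hlt : amalgLen A B (z⁻¹ * (z :: (t ++ [y])).prod * z) < n := by
    rw [← hn, hG.amalgLen_eq hw]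
    calc amalgLen A B (z⁻¹ * (z :: (t ++ [y])).prod * z) = amalgLen A B (t.prod * (y * z)) := by
          simp [mul_assoc]
      _ ≤ amalgLen A B t.prod + amalgLen A B (y * z) := hG.amalgLen_mul_le _ _
      _ ≤ t.length + 1 := add_le_add (amalgLen_le hw.of_cons.of_append_left)
          (hG.amalgLen_le_one (mul_mem_of_not_alternates hyz))
      _ < (z :: (t ++ [y])).length := by simp
  obtain ⟨x, hx⟩ := ih _ hlt (hG.boundedElement_conj hg z) rfl
  exact ⟨z * x, by simpa [mul_assoc] using hx⟩

end IsAmalgamatedProduct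

end Bounded

section Conjugation

variable {A B : Subgroup G}

namespace IsAmalgamatedProduct

theorem exists_conjWord_of_boundedElement (hG : IsAmalgamatedProduct A B) {g : G}
    (hg : BoundedElement A B g) (hgC : g ∉ A ⊓ B) :
    ∃ u c, IsReducedWord A B (conjWord u c) ∧ (conjWord u c).prod = g := by
  have hfactor : g ∈ A ∨ g ∈ B → ∃ u c, IsReducedWord A B (conjWord u c) ∧
      (conjWord u c).prod = g :=
    fun h => ⟨[], g, by simpa using isReducedWord_singleton.2 ⟨h, hgC⟩, by simp⟩
  obtain ⟨x, hx, hmin⟩ := (measure (amalgLen A B)).wf.has_min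
    {x | x⁻¹ * g * x ∈ A ∨ x⁻¹ * g * x ∈ B} (hG.exists_conj_mem_of_boundedElement hg)
  rcases hG.exists_isReducedWord_or_mem_inf x with hxC | ⟨w, hw, rfl⟩
  · obtain ⟨hxA, hxB⟩ := Subgroup.mem_inf.1 hxC
    refine hfactor (hx.imp (fun h => ?_) (fun h => ?_))
    · simpa [mul_assoc] using mul_mem (mul_mem hxA h) (inv_mem hxA)
    · simpa [mul_assoc] using mul_mem (mul_mem hxB h) (inv_mem hxB)
  rcases List.eq_nil_or_concat' w with rfl | ⟨t, z, rfl⟩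
  · exact hfactor (by simpa using hx)
  set c := (t ++ [z]).prod⁻¹ * g * (t ++ [z]).prod
  have hz : IsLetter A B z := hw.isLetter (by simp)
  -- otherwise the shorter word `t` would already conjugate `g` into a factor
  have hzc : Alternates A B z c := by
    by_contra h
    refine hmin t.prod ?_ ?_
    · have h' : ¬Alternates A B z⁻¹ c := fun h' => h ((sameFactors_inv z).symm.alternates_left h')
      have heq : t.prod⁻¹ * g * t.prod = z⁻¹⁻¹ * c * z⁻¹ := by
        simp only [c, List.prod_append, List.prod_singleton]
        group
      show _ ∈ A ∨ _ ∈ B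
      rw [heq]
      exact conj_mem_of_not_alternates h'
    · show amalgLen A B t.prod < amalgLen A B (t ++ [z]).prod
      rw [hG.amalgLen_eq hw]
      exact (amalgLen_le hw.of_append_left).trans_lt (by simp)
  refine ⟨t ++ [z], c, IsReducedWord.conjWord ?_, by simp [c]; group⟩
  rw [List.append_assoc]
  exact hw.append_cons_cons (w := []) (isReducedWord_singleton.2
    ⟨hx, not_mem_inf_of_alternates hz.1 hzc⟩) hzc

theorem not_boundedElement_mul_conjWord (hG : IsAmalgamatedProduct A B) {z c₀ w c : G}
    {u r v : List G} (hU : IsReducedWord A B (conjWord (z :: u) c₀))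
    (hw : SameFactors A B z⁻¹ w) (hr : IsReducedWord A B (w :: (r ++ [c])))
    (hv : z * w * r.prod = v.prod) :
    ¬BoundedElement A B ((conjWord (z :: u) c₀).prod * (conjWord v c).prod) := by
  have h₁ : IsReducedWord A B ((c₀ :: invWord u) ++ [z⁻¹]) := by
    rw [conjWord, List.append_assoc] at hU
    simpa using hU.of_append_right
  have h₂ : IsReducedWord A B (c₀ :: ((invWord u ++ w :: r) ++ [c])) := by
    simpa using (h₁.replace_last hw).glue hr
  intro hb
  refine hG.not_boundedElement_of_isReducedWord_cons h₂ ?_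
  convert (hG.boundedElement_conj_iff (z :: u).prod _).2 hb using 1
  rw [prod_conjWord, prod_conjWord, ← hv]
  simp only [List.prod_cons, List.prod_append, prod_invWord]
  group

theorem amalgLen_conj_le_of_boundedElement_mul (hG : IsAmalgamatedProduct A B) {z c₀ h : G}
    {u : List G} (hU : IsReducedWord A B (conjWord (z :: u) c₀)) (hh : BoundedElement A B h)
    (hlen : amalgLen A B h ≤ amalgLen A B (conjWord (z :: u) c₀).prod)
    (hbdd : BoundedElement A B ((conjWord (z :: u) c₀).prod * h)) :
    amalgLen A B (z⁻¹ * h * z) ≤ amalgLen A B (conjWord u c₀).prod := by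
  have hU' : IsReducedWord A B (conjWord u c₀) := by
    rw [conjWord_cons] at hU
    exact hU.of_cons.of_append_left
  rw [hG.amalgLen_eq hU', length_conjWord]
  rw [hG.amalgLen_eq hU, length_conjWord] at hlen
  have hz : IsLetter A B z := hU.isLetter (by simp [conjWord])
  have hz' : IsLetter A B z⁻¹ := (sameFactors_inv z).isLetter hz
  by_cases hC : h ∈ A ⊓ B
  · have hconj : z⁻¹ * h * z ∈ A ∨ z⁻¹ * h * z ∈ B := hz.1.imp
      (fun hA => mul_mem (mul_mem (inv_mem hA) hC.1) hA)
      (fun hB => mul_mem (mul_mem (inv_mem hB) hC.2) hB)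
    exact (hG.amalgLen_le_one hconj).trans (by omega)
  obtain ⟨v, c, hV, rfl⟩ := hG.exists_conjWord_of_boundedElement hh hC
  rw [hG.amalgLen_eq hV, length_conjWord] at hlen
  have hvc : IsReducedWord A B (v ++ [c]) := hV.of_append_left
  rcases v with _ | ⟨y, v⟩
  · by_cases hzc : Alternates A B z c
    · refine absurd hbdd (hG.not_boundedElement_mul_conjWord (r := []) hU (.refl _) ?_ (by simp))
      exact isReducedWord_cons.2 ⟨hz', hvc, by simpa using (sameFactors_inv z).alternates_left hzc⟩
    · simpa using (hG.amalgLen_le_one (conj_mem_of_not_alternates hzc)).trans (by omega)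
  have hy : IsLetter A B y := hV.isLetter (by simp [conjWord])
  by_cases hzy : Alternates A B z y
  · refine absurd hbdd (hG.not_boundedElement_mul_conjWord (r := y :: v) hU (.refl _) ?_
      (by simp))
    exact isReducedWord_cons.2 ⟨hz', hvc, by simpa using (sameFactors_inv z).alternates_left hzy⟩
  have hzy' : ¬Alternates A B z⁻¹ y := fun h => hzy ((sameFactors_inv z).symm.alternates_left h)
  by_cases hk : z⁻¹ * y ∈ A ⊓ B
  · rw [conjWord_cons] at hV
    calc amalgLen A B (z⁻¹ * (conjWord (y :: v) c).prod * z)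
        = amalgLen A B (z⁻¹ * y * (conjWord v c).prod * (z⁻¹ * y)⁻¹) := by
          simp only [prod_conjWord, List.prod_cons]
          group
      _ ≤ amalgLen A B (conjWord v c).prod := hG.amalgLen_conj_le_of_mem_inf hk _
      _ ≤ 2 * u.length + 1 := by
          rw [hG.amalgLen_eq hV.of_cons.of_append_left, length_conjWord]
          simp only [List.length_cons] at hlen
          omega
  · refine absurd hbdd (hG.not_boundedElement_mul_conjWord (r := v) hU
      (sameFactors_mul_left hz' hzy' hk) ?_ (by simp))
    exact hvc.replace_head (sameFactors_mul_right hy hzy' hk)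

theorem not_alternates_conj_of_boundedElement_mul (hG : IsAmalgamatedProduct A B) {c₀ : G}
    {u : List G} {h : G} (hU : IsReducedWord A B (conjWord u c₀)) (hh : BoundedElement A B h)
    (hlen : amalgLen A B h ≤ amalgLen A B (conjWord u c₀).prod)
    (hbdd : BoundedElement A B ((conjWord u c₀).prod * h)) :
    ¬Alternates A B c₀ (u.prod⁻¹ * h * u.prod) := by
  induction u generalizing h with
  | nil =>
    have hc₀ : IsLetter A B c₀ := isReducedWord_singleton.1 hU
    have hfac : h ∈ A ∨ h ∈ B := hG.mem_or_mem_of_amalgLen_le_one (hlen.trans (amalgLen_le hU))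
    simp only [conjWord_nil, List.prod_singleton, List.prod_nil, inv_one, one_mul,
      mul_one] at hbdd ⊢
    intro halt
    refine hG.not_boundedElement_of_isReducedWord_cons (s := []) ?_ (by simpa using hbdd)
    exact isReducedWord_cons.2 ⟨hc₀, isReducedWord_singleton.2
      ⟨hfac, not_mem_inf_of_alternates hc₀.1 halt⟩, by simpa using halt⟩
  | cons z u ih =>
    have hU' : IsReducedWord A B (conjWord u c₀) := by
      rw [conjWord_cons] at hU
      exact hU.of_cons.of_append_left
    have hbdd' : BoundedElement A B ((conjWord u c₀).prod * (z⁻¹ * h * z)) := by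
      convert hG.boundedElement_conj hbdd z using 1
      simp only [prod_conjWord, List.prod_cons]
      group
    simpa [mul_assoc] using ih hU' (hG.boundedElement_conj hh z)
      (hG.amalgLen_conj_le_of_boundedElement_mul hU hh hlen hbdd) hbdd'

theorem exists_conj_forall_mem_of_boundedElement (hG : IsAmalgamatedProduct A B) {ι : Type*}
    (g : ι → G) (i₀ : ι) (hb : ∀ i, BoundedElement A B (g i))
    (hb₀ : ∀ i, i ≠ i₀ → BoundedElement A B (g i₀ * g i))
    (hmax : ∀ i, amalgLen A B (g i) ≤ amalgLen A B (g i₀)) :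
    ∃ x, (∀ i, x⁻¹ * g i * x ∈ A) ∨ (∀ i, x⁻¹ * g i * x ∈ B) := by
  by_cases hC : g i₀ ∈ A ⊓ B
  · refine ⟨1, Or.inl fun i => ?_⟩
    have := hG.mem_inf_of_amalgLen_eq_zero
      (Nat.le_zero.1 ((hmax i).trans (hG.amalgLen_of_mem_inf hC).le))
    simpa using this.1
  obtain ⟨u, c₀, hU, hg₀⟩ := hG.exists_conjWord_of_boundedElement (hb i₀) hC
  have hc₀ : IsLetter A B c₀ := hU.isLetter (by simp [conjWord])
  have key : ∀ i, ¬Alternates A B c₀ (u.prod⁻¹ * g i * u.prod) := by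
    intro i
    refine hG.not_alternates_conj_of_boundedElement_mul hU (hb i) (hg₀ ▸ hmax i) (hg₀ ▸ ?_)
    rcases eq_or_ne i i₀ with rfl | hi
    exacts [(hb i).mul_self, hb₀ i hi]
  refine ⟨u.prod, hc₀.1.imp (fun hA i => ?_) (fun hB i => ?_)⟩
  · exact mem_left_of_not_alternates (key i) fun hB => hc₀.2 ⟨hA, hB⟩
  · exact mem_right_of_not_alternates (key i) fun hA => hc₀.2 ⟨hA, hB⟩

end IsAmalgamatedProduct

end Conjugation

theorem stmt0 (A B : Subgroup G) (hG : IsAmalgamatedProduct A B)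
    (n : ℕ) (g : Fin (n + 1) → G) (H : Subgroup G)
    (hH : H = Subgroup.closure (Set.range g))
    (hmax : ∀ j, amalgLen A B (g j) ≤ amalgLen A B (g 0)) :
    (∃ x : G, (∀ h ∈ H, x⁻¹ * h * x ∈ A) ∨ (∀ h ∈ H, x⁻¹ * h * x ∈ B)) ↔
      ((∀ j, BoundedElement A B (g j)) ∧
        ∀ j, j ≠ 0 → BoundedElement A B (g 0 * g j)) := by
  have hgH : ∀ j, g j ∈ H := fun j => hH ▸ Subgroup.subset_closure (Set.mem_range_self j)
  constructor
  · rintro ⟨x, hx⟩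
    have hbH : ∀ h ∈ H, BoundedElement A B h := fun h hh =>
      (hG.boundedElement_conj_iff x h).1 (hG.boundedElement_of_mem (hx.imp (· h hh) (· h hh)))
    exact ⟨fun j => hbH _ (hgH j), fun j _ => hbH _ (mul_mem (hgH 0) (hgH j))⟩
  · rintro ⟨hb, hb₀⟩
    obtain ⟨x, hx⟩ := hG.exists_conj_forall_mem_of_boundedElement g 0 hb hb₀ hmax
    subst hH
    refine ⟨x, hx.imp (fun hA h hh => ?_) (fun hB h hh => ?_)⟩
    · exact conj_mem_of_mem_closure (Set.forall_mem_range.2 hA) hh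
    · exact conj_mem_of_mem_closure (Set.forall_mem_range.2 hB) hh
end

section
/- Suppose φ = β_l ∘ α_l ∘ ⋯ ∘ β₁ ∘ α₁ ∈ Aut(A²) is such that β_i ∈ J \ Aff for 1 ≤ i ≤ l, α_i ∈ Aff \ J for 2 ≤ i ≤ l, and α₁ ∈ Aff. Then bideg φ = (∏_{i=1}^{l} deg β_i, ∏_{i=1}^{l−1} deg β_i). -/
open MvPolynomial

variable {k : Type*} [Field k]

/-- The subgroup `Aff` of affine automorphisms: both components have degree `1`. -/
def IsAff (φ : MvPolynomial (Fin 2) k ≃ₐ[k] MvPolynomial (Fin 2) k) : Prop :=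
  (φ (X 0)).totalDegree = 1 ∧ (φ (X 1)).totalDegree = 1

/-- The de Jonquières subgroup `J`: automorphisms of the form
`(a x + P(y), b y + c)` with `a, b ∈ kˣ`, `c ∈ k`, `P ∈ k[y]`. -/
def IsJonq (φ : MvPolynomial (Fin 2) k ≃ₐ[k] MvPolynomial (Fin 2) k) : Prop :=
  ∃ (a b : kˣ) (c : k) (P : Polynomial k),
    φ (X 0) = C (a : k) * X 0 + Polynomial.aeval (X 1) P ∧
      φ (X 1) = C (b : k) * X 1 + C c

/-- The degree of a polynomial automorphism: the maximum of the total degrees of its two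
components. -/
noncomputable def adeg (φ : MvPolynomial (Fin 2) k ≃ₐ[k] MvPolynomial (Fin 2) k) : ℕ :=
  max (φ (X 0)).totalDegree (φ (X 1)).totalDegree

/-!
Let `ψ` be a partial product and `D = deg ψ(x)`; the invariant is `deg ψ(y) < D`.
An affine `α ∉ J` has a nonzero `x`-coefficient in its second component, so after composing
with it the `y`-component has degree exactly `D` and the `x`-component degree at most `D`.
Composing then with `β = (a x + P(y), b y + c)`, `deg P = d ≥ 2`, the term `P(y-component)`
of degree `dD` dominates the new `x`-component, while the `y`-component keeps degree `D`.
So each factor `β` multiplies the first degree by `deg β` and passes the previous first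
degree to the second component.
-/

namespace MvPolynomial

section Degree

variable {σ R : Type*} [CommRing R]

theorem algEquiv_C (ψ : MvPolynomial σ R ≃ₐ[R] MvPolynomial σ R) (r : R) : ψ (C r) = C r :=
  algHom_C ψ.toAlgHom r

theorem totalDegree_algEquiv_X_pos [Nontrivial R]
    (ψ : MvPolynomial σ R ≃ₐ[R] MvPolynomial σ R) (i : σ) : 0 < (ψ (X i)).totalDegree := by
  by_contra! h
  have hC : ψ (X i) = ψ (C ((ψ (X i)).coeff 0)) := by
    rw [algEquiv_C, ← totalDegree_eq_zero_iff_eq_C]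
    exact Nat.le_zero.mp h
  simpa using congrArg totalDegree (ψ.injective hC)

theorem totalDegree_C_mul_le (c : R) (p : MvPolynomial σ R) :
    (C c * p).totalDegree ≤ p.totalDegree :=
  (totalDegree_mul _ _).trans (by simp)

variable [IsDomain R]

theorem totalDegree_C_mul_of_ne_zero {c : R} (hc : c ≠ 0) (p : MvPolynomial σ R) :
    (C c * p).totalDegree = p.totalDegree := by
  rcases eq_or_ne p 0 with rfl | hp
  · simp
  · rw [totalDegree_mul_of_isDomain (C_ne_zero.mpr hc) hp, totalDegree_C, zero_add]

theorem totalDegree_pow_of_isDomain {q : MvPolynomial σ R} (hq : q ≠ 0) (n : ℕ) :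
    (q ^ n).totalDegree = n * q.totalDegree := by
  induction n with
  | zero => simp
  | succ n ih =>
    rw [pow_succ, totalDegree_mul_of_isDomain (pow_ne_zero _ hq) hq, ih, Nat.succ_mul]

theorem totalDegree_aeval_of_pos (P : Polynomial R) {q : MvPolynomial σ R}
    (hq : 0 < q.totalDegree) :
    (Polynomial.aeval q P).totalDegree = P.natDegree * q.totalDegree := by
  rcases P.natDegree.eq_zero_or_pos with hn | hn
  · obtain ⟨c, rfl⟩ := Polynomial.natDegree_eq_zero.mp hn
    simp [algebraMap_eq]
  have hq0 : q ≠ 0 := by rintro rfl; simp at hq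
  have hlead : P.coeff P.natDegree ≠ 0 :=
    Polynomial.leadingCoeff_ne_zero.mpr (Polynomial.ne_zero_of_natDegree_gt hn)
  have htop : (P.coeff P.natDegree • q ^ P.natDegree).totalDegree =
      P.natDegree * q.totalDegree := by
    rw [smul_eq_C_mul, totalDegree_C_mul_of_ne_zero hlead, totalDegree_pow_of_isDomain hq0]
  have hlow : (∑ i ∈ Finset.range P.natDegree, P.coeff i • q ^ i).totalDegree <
      P.natDegree * q.totalDegree := by
    refine (totalDegree_finsetSum _ _).trans_lt
      ((Finset.sup_lt_iff (by positivity)).mpr fun i hi => ?_)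
    calc (P.coeff i • q ^ i).totalDegree ≤ i * q.totalDegree :=
          (totalDegree_smul_le _ _).trans (totalDegree_pow _ _)
      _ < P.natDegree * q.totalDegree :=
          Nat.mul_lt_mul_of_pos_right (Finset.mem_range.mp hi) hq
  rw [Polynomial.aeval_eq_sum_range, Finset.sum_range_succ,
    totalDegree_add_eq_right_of_totalDegree_lt (htop ▸ hlow), htop]

end Degree

end MvPolynomial

theorem Fin.prod_filter_val_add_one_lt {M : Type*} [CommMonoid M] (m : ℕ) (f : Fin (m + 1) → M) :
    ∏ i ∈ Finset.univ.filter (fun i : Fin (m + 1) => (i : ℕ) + 1 < m + 1), f i =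
      ∏ i : Fin m, f i.castSucc := by
  rw [Finset.prod_filter, Fin.prod_univ_castSucc]
  simp

open Finsupp (single)

local notation "k[x,y]" => MvPolynomial (Fin 2) k

theorem Finsupp.eq_zero_or_single_or_two_le_degree (m : Fin 2 →₀ ℕ) :
    m = 0 ∨ m = single 0 1 ∨ m = single 1 1 ∨ 2 ≤ m.degree := by
  rw [Finsupp.degree_eq_sum, Fin.sum_univ_two]
  by_contra! h
  obtain ⟨h0, h1, h2, hm⟩ := h
  have : m 0 + m 1 = 1 := by
    by_contra! h'
    exact h0 (by ext i; fin_cases i <;> simp <;> omega)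
  rcases Nat.add_eq_one_iff.mp this with ⟨ha, hb⟩ | ⟨ha, hb⟩
  · exact h2 (by ext i; fin_cases i <;> simp [ha, hb])
  · exact h1 (by ext i; fin_cases i <;> simp [ha, hb])

theorem eq_affine_of_totalDegree_le_one {p : k[x,y]} (hp : p.totalDegree ≤ 1) :
    p = C (p.coeff (single 0 1)) * X 0 + C (p.coeff (single 1 1)) * X 1 + C (p.coeff 0) := by
  ext m
  simp only [coeff_add, coeff_C_mul, coeff_X, coeff_C]
  rcases m.eq_zero_or_single_or_two_le_degree with rfl | rfl | rfl | hm
  · simp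
  · simp [Finsupp.single_eq_single_iff, eq_comm (a := (0 : Fin 2 →₀ ℕ))]
  · simp [Finsupp.single_eq_single_iff, eq_comm (a := (0 : Fin 2 →₀ ℕ))]
  · have hne : ∀ i : Fin 2, single i 1 ≠ m := by
      rintro i rfl; simp at hm
    rw [coeff_eq_zero_of_totalDegree_lt (hp.trans_lt hm : p.totalDegree < m.degree),
      if_neg (hne 0), if_neg (hne 1), if_neg (by rintro rfl; simp at hm)]
    ring

theorem totalDegree_map_affine_le {ψ : k[x,y] ≃ₐ[k] k[x,y]} {p : k[x,y]}
    (hp : p.totalDegree ≤ 1) (hψ : (ψ (X 1)).totalDegree ≤ (ψ (X 0)).totalDegree) :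
    (ψ p).totalDegree ≤ (ψ (X 0)).totalDegree := by
  rw [eq_affine_of_totalDegree_le_one hp]
  simp only [map_add, map_mul, algEquiv_C]
  refine (totalDegree_add _ _).trans (max_le ((totalDegree_add _ _).trans
    (max_le (totalDegree_C_mul_le _ _) ((totalDegree_C_mul_le _ _).trans hψ))) ?_)
  simp

theorem totalDegree_map_affine_eq {ψ : k[x,y] ≃ₐ[k] k[x,y]} {p : k[x,y]}
    (hp : p.totalDegree ≤ 1) (hx : p.coeff (single 0 1) ≠ 0)
    (hψ : (ψ (X 1)).totalDegree < (ψ (X 0)).totalDegree) :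
    (ψ p).totalDegree = (ψ (X 0)).totalDegree := by
  have hlow : (C (p.coeff (single 1 1)) * ψ (X 1) + C (p.coeff 0)).totalDegree <
      (ψ (X 0)).totalDegree :=
    (totalDegree_add _ _).trans_lt (max_lt ((totalDegree_C_mul_le _ _).trans_lt hψ)
      (by simpa using (Nat.zero_le _).trans_lt hψ))
  rw [eq_affine_of_totalDegree_le_one hp]
  simp only [map_add, map_mul, algEquiv_C, add_assoc]
  rw [totalDegree_add_eq_left_of_totalDegree_lt (by rwa [totalDegree_C_mul_of_ne_zero hx]),
    totalDegree_C_mul_of_ne_zero hx]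

theorem IsAff.isJonq_of_coeff_eq_zero {a : k[x,y] ≃ₐ[k] k[x,y]} (ha : IsAff a)
    (hx : (a (X 1)).coeff (single 0 1) = 0) : IsJonq a := by
  set p := (a (X 0)).coeff (single 0 1)
  set q := (a (X 0)).coeff (single 1 1)
  set r := (a (X 0)).coeff 0
  set t := (a (X 1)).coeff (single 1 1)
  set u := (a (X 1)).coeff 0
  have ha0 : a (X 0) = C p * X 0 + C q * X 1 + C r := eq_affine_of_totalDegree_le_one ha.1.le
  have ha1 : a (X 1) = C t * X 1 + C u := by
    simpa [hx] using eq_affine_of_totalDegree_le_one ha.2.le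
  have ht : t ≠ 0 := by
    intro ht
    have h := ha.2
    simp [ha1, ht] at h
  have hp : p ≠ 0 := by
    intro hp
    have h : C t * X 0 - C q * X 1 = (C (t * r - q * u) : k[x,y]) := a.injective (by
      simp only [map_sub, map_mul, algEquiv_C, ha0, ha1, hp, C_0]
      ring)
    have := congrArg (coeff (single 0 1)) h
    simp [coeff_X, Finsupp.single_eq_single_iff, eq_comm (a := (0 : Fin 2 →₀ ℕ))] at this
    exact ht this
  refine ⟨Units.mk0 p hp, Units.mk0 t ht, u, Polynomial.C q * Polynomial.X + Polynomial.C r,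
    ?_, ?_⟩
  · simp [ha0, algebraMap_eq]
    ring
  · simp [ha1]

theorem totalDegree_mul_jonq_X1 (χ : k[x,y] ≃ₐ[k] k[x,y]) {b : k[x,y] ≃ₐ[k] k[x,y]} {β : kˣ}
    {γ : k} (hb1 : b (X 1) = C (β : k) * X 1 + C γ) :
    ((χ * b) (X 1)).totalDegree = (χ (X 1)).totalDegree := by
  have hpos := totalDegree_algEquiv_X_pos χ 1
  rw [AlgEquiv.mul_apply, hb1, map_add, map_mul, algEquiv_C, algEquiv_C,
    totalDegree_add_eq_left_of_totalDegree_lt (by simpa [totalDegree_C_mul_of_ne_zero β.ne_zero]),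
    totalDegree_C_mul_of_ne_zero β.ne_zero]

theorem totalDegree_mul_jonq_X0 (χ : k[x,y] ≃ₐ[k] k[x,y]) {b : k[x,y] ≃ₐ[k] k[x,y]} {α : kˣ}
    {P : Polynomial k} (hb0 : b (X 0) = C (α : k) * X 0 + Polynomial.aeval (X 1) P)
    (hP : 2 ≤ P.natDegree) (hχ : (χ (X 0)).totalDegree ≤ (χ (X 1)).totalDegree) :
    ((χ * b) (X 0)).totalDegree = P.natDegree * (χ (X 1)).totalDegree := by
  have hpos := totalDegree_algEquiv_X_pos χ 1
  have hlead := totalDegree_aeval_of_pos P hpos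
  have hlow : (C (α : k) * χ (X 0)).totalDegree < P.natDegree * (χ (X 1)).totalDegree :=
    calc (C (α : k) * χ (X 0)).totalDegree ≤ (χ (X 1)).totalDegree :=
          (totalDegree_C_mul_le _ _).trans hχ
      _ < 2 * (χ (X 1)).totalDegree := by omega
      _ ≤ P.natDegree * (χ (X 1)).totalDegree := Nat.mul_le_mul_right _ hP
  rw [AlgEquiv.mul_apply, hb0, map_add, map_mul, algEquiv_C, ← Polynomial.aeval_algHom_apply,
    totalDegree_add_eq_right_of_totalDegree_lt (hlead ▸ hlow), hlead]

theorem two_le_natDegree_of_not_isAff {b : k[x,y] ≃ₐ[k] k[x,y]} {α β : kˣ} {γ : k}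
    {P : Polynomial k} (hb0 : b (X 0) = C (α : k) * X 0 + Polynomial.aeval (X 1) P)
    (hb1 : b (X 1) = C (β : k) * X 1 + C γ) (hb : ¬IsAff b) : 2 ≤ P.natDegree := by
  by_contra! hP
  refine hb ⟨le_antisymm ?_ (totalDegree_algEquiv_X_pos b 0), ?_⟩
  · rw [hb0]
    refine (totalDegree_add _ _).trans (max_le ((totalDegree_C_mul_le _ _).trans_eq
      (totalDegree_X _)) ?_)
    rw [totalDegree_aeval_of_pos P (by simp), totalDegree_X]
    omega
  · simpa using totalDegree_mul_jonq_X1 1 hb1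

theorem totalDegree_X0_of_jonq {b : k[x,y] ≃ₐ[k] k[x,y]} {α : kˣ} {P : Polynomial k}
    (hb0 : b (X 0) = C (α : k) * X 0 + Polynomial.aeval (X 1) P) (hP : 2 ≤ P.natDegree) :
    (b (X 0)).totalDegree = P.natDegree := by
  simpa using totalDegree_mul_jonq_X0 1 hb0 hP (by simp)

theorem IsJonq.two_le_totalDegree {b : k[x,y] ≃ₐ[k] k[x,y]} (hbJ : IsJonq b)
    (hbA : ¬IsAff b) : 2 ≤ (b (X 0)).totalDegree := by
  obtain ⟨α, β, γ, P, hb0, hb1⟩ := hbJ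
  have hP := two_le_natDegree_of_not_isAff hb0 hb1 hbA
  rwa [totalDegree_X0_of_jonq hb0 hP]

theorem IsJonq.totalDegree_mul {b : k[x,y] ≃ₐ[k] k[x,y]} (hbJ : IsJonq b) (hbA : ¬IsAff b)
    (χ : k[x,y] ≃ₐ[k] k[x,y]) (hχ : (χ (X 0)).totalDegree ≤ (χ (X 1)).totalDegree) :
    ((χ * b) (X 0)).totalDegree = (b (X 0)).totalDegree * (χ (X 1)).totalDegree ∧
      ((χ * b) (X 1)).totalDegree = (χ (X 1)).totalDegree := by
  obtain ⟨α, β, γ, P, hb0, hb1⟩ := hbJ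
  have hP := two_le_natDegree_of_not_isAff hb0 hb1 hbA
  rw [totalDegree_X0_of_jonq hb0 hP]
  exact ⟨totalDegree_mul_jonq_X0 χ hb0 hP hχ, totalDegree_mul_jonq_X1 χ hb1⟩

theorem IsAff.totalDegree_mul {a : k[x,y] ≃ₐ[k] k[x,y]} (haA : IsAff a) (haJ : ¬IsJonq a)
    (ψ : k[x,y] ≃ₐ[k] k[x,y]) (hψ : (ψ (X 1)).totalDegree < (ψ (X 0)).totalDegree) :
    ((ψ * a) (X 0)).totalDegree ≤ (ψ (X 0)).totalDegree ∧
      ((ψ * a) (X 1)).totalDegree = (ψ (X 0)).totalDegree :=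
  ⟨totalDegree_map_affine_le haA.1.le hψ.le,
    totalDegree_map_affine_eq haA.2.le (fun hx => haJ (haA.isJonq_of_coeff_eq_zero hx)) hψ⟩

theorem totalDegree_prod_ofFn (m : ℕ) (a b : Fin (m + 1) → (k[x,y] ≃ₐ[k] k[x,y]))
    (hbJ : ∀ i, IsJonq (b i)) (hbA : ∀ i, ¬IsAff (b i)) (haA : ∀ i, IsAff (a i))
    (haJ : ∀ i : Fin (m + 1), 1 ≤ (i : ℕ) → ¬IsJonq (a i)) :
    ((List.ofFn fun i => a i * b i).prod (X 0)).totalDegree = ∏ i, (b i (X 0)).totalDegree ∧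
      ((List.ofFn fun i => a i * b i).prod (X 1)).totalDegree =
        ∏ i : Fin m, (b i.castSucc (X 0)).totalDegree := by
  induction m with
  | zero =>
    have h := (hbJ 0).totalDegree_mul (hbA 0) (a 0) (by rw [(haA 0).1, (haA 0).2])
    simpa [(haA 0).2] using h
  | succ m ih =>
    set ψ := (List.ofFn fun i : Fin (m + 1) => a i.castSucc * b i.castSucc).prod
    have hsplit : (List.ofFn fun i => a i * b i).prod = ψ * a (Fin.last _) * b (Fin.last _) := by
      rw [List.ofFn_succ', List.prod_concat, mul_assoc]
    obtain ⟨hψ0, hψ1⟩ := ih _ _ (fun i => hbJ _) (fun i => hbA _) (fun i => haA _)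
      (fun i hi => haJ i.castSucc hi)
    have hψ : (ψ (X 1)).totalDegree < (ψ (X 0)).totalDegree := by
      rw [hψ0, Fin.prod_univ_castSucc, ← hψ1]
      exact lt_mul_of_one_lt_right (totalDegree_algEquiv_X_pos ψ 1)
        ((hbJ _).two_le_totalDegree (hbA _))
    obtain ⟨hχ0, hχ1⟩ := (haA _).totalDegree_mul (haJ (Fin.last _) (Nat.le_add_left 1 m)) ψ hψ
    obtain ⟨h0, h1⟩ := (hbJ _).totalDegree_mul (hbA _) _ (hχ1 ▸ hχ0)
    rw [hsplit, h0, h1, hχ1, Fin.prod_univ_castSucc (n := m + 1), ← hψ0, mul_comm]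
    exact ⟨rfl, rfl⟩

/-- The point map `β ∘ α` corresponds to the algebra automorphism `α * β`, so
`β_l ∘ α_l ∘ ⋯ ∘ β₁ ∘ α₁` is the product `(a 0 * b 0) * ⋯ * (a (l-1) * b (l-1))`,
with `a i = α_{i+1}` and `b i = β_{i+1}`. -/
theorem stmt5 (l : ℕ) (hl : 1 ≤ l)
    (a b : Fin l → (MvPolynomial (Fin 2) k ≃ₐ[k] MvPolynomial (Fin 2) k))
    (φ : MvPolynomial (Fin 2) k ≃ₐ[k] MvPolynomial (Fin 2) k)
    (hφ : φ = (List.ofFn fun i => a i * b i).prod)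
    (hbJ : ∀ i, IsJonq (b i)) (hbnA : ∀ i, ¬ IsAff (b i))
    (haA : ∀ i, IsAff (a i))
    (hanJ : ∀ i : Fin l, 1 ≤ (i : ℕ) → ¬ IsJonq (a i)) :
    (φ (X 0)).totalDegree = ∏ i, (b i (X 0)).totalDegree ∧
      (φ (X 1)).totalDegree =
        ∏ i ∈ Finset.univ.filter (fun i : Fin l => (i : ℕ) + 1 < l),
          (b i (X 0)).totalDegree := by
  obtain ⟨m, rfl⟩ := Nat.exists_eq_add_of_le' hl
  subst hφ
  rw [Fin.prod_filter_val_add_one_lt]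
  exact totalDegree_prod_ofFn m a b hbJ hbnA haA hanJ
end

section
/- Let k be a field, let f, g ∈ k[x,y] be coprime polynomials, and let φ be a k-algebra automorphism of k[x,y]. Suppose there exist pairs (t₁,t₂), (t₃,t₄), (s₁,s₂), (s₃,s₄) ∈ k² \ {(0,0)} with t₁t₄ − t₂t₃ ≠ 0 such that the equalities of principal ideals (t₂ f + t₁ g) = (s₂ φ(f) + s₁ φ(g)) and (t₄ f + t₃ g) = (s₄ φ(f) + s₃ φ(g)) hold in k[x,y]. Then the k-linear spans coincide: span_k{f, g} = span_k{φ(f), φ(g)}; in particular there exist a₁, a₂, a₃, a₄ ∈ k such that φ(f) = a₁ f + a₂ g and φ(g) = a₃ f + a₄ g. -/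
open MvPolynomial

lemma aux_C_commutes {k : Type*} [Field k] (n : ℕ) (c : k) :
    (MvPolynomial.finSuccEquiv k n) (C c) = Polynomial.C (C c) := by
  rw [show (C c : MvPolynomial (Fin (n+1)) k) = algebraMap k _ c from rfl, AlgEquiv.commutes]
  simp [algebraMap_eq, Polynomial.algebraMap_apply]

lemma aux_isUnit {k : Type*} [Field k] {p : MvPolynomial (Fin 2) k} (h : IsUnit p) :
    ∃ c : k, c ≠ 0 ∧ p = C c := by
  obtain ⟨q, hq, hqe⟩ := Polynomial.isUnit_iff.mp (h.map (MvPolynomial.finSuccEquiv k 1))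
  obtain ⟨r, hr, hre⟩ := Polynomial.isUnit_iff.mp (hq.map (MvPolynomial.finSuccEquiv k 0))
  have hrc : r = C (coeff 0 r) := eq_C_of_isEmpty r
  set c := coeff 0 r with hc
  have hq' : q = C c := by
    apply (MvPolynomial.finSuccEquiv k 0).injective
    rw [← hre, hrc, aux_C_commutes]
  have hp : p = C c := by
    apply (MvPolynomial.finSuccEquiv k 1).injective
    rw [← hqe, hq', aux_C_commutes]
  refine ⟨c, fun h0 => ?_, hp⟩
  rw [hp, h0, map_zero] at h
  exact h.ne_zero rfl

lemma aux_mem {k : Type*} [Field k] (a b : k) {x y : MvPolynomial (Fin 2) k}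
    {S : Submodule k (MvPolynomial (Fin 2) k)} (hx : x ∈ S) (hy : y ∈ S) :
    C a * x + C b * y ∈ S := by
  rw [← smul_eq_C_mul, ← smul_eq_C_mul]
  exact add_mem (S.smul_mem _ hx) (S.smul_mem _ hy)

lemma aux_fix {k : Type*} [Field k]
    (φ : MvPolynomial (Fin 2) k ≃ₐ[k] MvPolynomial (Fin 2) k) (c : k) :
    φ (C c) = C c := by
  rw [show (C c : MvPolynomial (Fin 2) k) = algebraMap k _ c from rfl, AlgEquiv.commutes]

theorem stmt11 {k : Type*} [Field k]
    (f g : MvPolynomial (Fin 2) k) (hfg : IsRelPrime f g)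
    (φ : MvPolynomial (Fin 2) k ≃ₐ[k] MvPolynomial (Fin 2) k)
    (t₁ t₂ t₃ t₄ s₁ s₂ s₃ s₄ : k)
    (ht : (t₁, t₂) ≠ (0, 0)) (ht' : (t₃, t₄) ≠ (0, 0))
    (hs : (s₁, s₂) ≠ (0, 0)) (hs' : (s₃, s₄) ≠ (0, 0))
    (hdet : t₁ * t₄ - t₂ * t₃ ≠ 0)
    (h1 : Ideal.span {C t₂ * f + C t₁ * g} = Ideal.span {C s₂ * φ f + C s₁ * φ g})
    (h2 : Ideal.span {C t₄ * f + C t₃ * g} = Ideal.span {C s₄ * φ f + C s₃ * φ g}) :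
    Submodule.span k {f, g} = Submodule.span k {φ f, φ g} ∧
      ∃ a₁ a₂ a₃ a₄ : k, φ f = C a₁ * f + C a₂ * g ∧ φ g = C a₃ * f + C a₄ * g := by
  set F := φ f with hFdef
  set G := φ g with hGdef
  set M := Submodule.span k {f, g} with hMdef
  set N := Submodule.span k ({F, G} : Set (MvPolynomial (Fin 2) k)) with hNdef
  have hfM : f ∈ M := Submodule.subset_span (by simp)
  have hgM : g ∈ M := Submodule.subset_span (by simp)
  have hFN : F ∈ N := Submodule.subset_span (by simp)
  have hGN : G ∈ N := Submodule.subset_span (by simp)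
  have hΔ : t₂ * t₃ - t₁ * t₄ ≠ 0 := fun h => hdet (by linear_combination -h)
  -- associated generators
  obtain ⟨u1, hu1⟩ := Ideal.span_singleton_eq_span_singleton.mp h1
  obtain ⟨c, hc0, hcC⟩ := aux_isUnit u1.isUnit
  have hr : C s₂ * F + C s₁ * G = C c * (C t₂ * f + C t₁ * g) := by
    rw [← hu1, hcC, mul_comm]
  obtain ⟨u2, hu2⟩ := Ideal.span_singleton_eq_span_singleton.mp h2
  obtain ⟨d, hd0, hdC⟩ := aux_isUnit u2.isUnit
  have hr' : C s₄ * F + C s₃ * G = C d * (C t₄ * f + C t₃ * g) := by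
    rw [← hu2, hdC, mul_comm]
  -- p, q ∈ N
  have hpN : C t₂ * f + C t₁ * g ∈ N := by
    have h5 : C t₂ * f + C t₁ * g = c⁻¹ • (C s₂ * F + C s₁ * G) := by
      rw [hr, ← smul_eq_C_mul (C t₂ * f + C t₁ * g) c, smul_smul, inv_mul_cancel₀ hc0, one_smul]
    rw [h5]
    exact Submodule.smul_mem _ _ (aux_mem _ _ hFN hGN)
  have hqN : C t₄ * f + C t₃ * g ∈ N := by
    have h5 : C t₄ * f + C t₃ * g = d⁻¹ • (C s₄ * F + C s₃ * G) := by
      rw [hr', ← smul_eq_C_mul (C t₄ * f + C t₃ * g) d, smul_smul, inv_mul_cancel₀ hd0, one_smul]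
    rw [h5]
    exact Submodule.smul_mem _ _ (aux_mem _ _ hFN hGN)
  -- f, g ∈ N
  have hfN : f ∈ N := by
    have h3 : f = ((t₂*t₃ - t₁*t₄)⁻¹ * t₃) • (C t₂ * f + C t₁ * g)
        - ((t₂*t₃ - t₁*t₄)⁻¹ * t₁) • (C t₄ * f + C t₃ * g) := by
      simp only [← smul_eq_C_mul]
      match_scalars <;> field_simp <;> ring
    rw [h3]
    exact sub_mem (Submodule.smul_mem _ _ hpN) (Submodule.smul_mem _ _ hqN)
  have hgN : g ∈ N := by
    have h3 : g = ((t₂*t₃ - t₁*t₄)⁻¹ * t₂) • (C t₄ * f + C t₃ * g)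
        - ((t₂*t₃ - t₁*t₄)⁻¹ * t₄) • (C t₂ * f + C t₁ * g) := by
      simp only [← smul_eq_C_mul]
      match_scalars <;> field_simp <;> ring
    rw [h3]
    exact sub_mem (Submodule.smul_mem _ _ hqN) (Submodule.smul_mem _ _ hpN)
  -- F, G ∈ M
  have hrM : C s₂ * F + C s₁ * G ∈ M := by
    rw [hr, ← smul_eq_C_mul (C t₂ * f + C t₁ * g) c]
    exact Submodule.smul_mem _ _ (aux_mem _ _ hfM hgM)
  have hr'M : C s₄ * F + C s₃ * G ∈ M := by
    rw [hr', ← smul_eq_C_mul (C t₄ * f + C t₃ * g) d]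
    exact Submodule.smul_mem _ _ (aux_mem _ _ hfM hgM)
  have hFGM : F ∈ M ∧ G ∈ M := by
    by_cases hσ : s₂ * s₃ - s₁ * s₄ = 0
    · -- degenerate case: f and g are constants
      simp only [Ne, Prod.mk.injEq, not_and] at hs hs'
      obtain ⟨l, hl0, hl3, hl4⟩ : ∃ l : k, l ≠ 0 ∧ s₃ = l * s₁ ∧ s₄ = l * s₂ := by
        by_cases h1s : s₁ = 0
        · have h2s : s₂ ≠ 0 := hs h1s
          have h3s : s₃ = 0 := by
            have h30 : s₂ * s₃ = 0 := by linear_combination hσ + s₄ * h1s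
            rcases mul_eq_zero.mp h30 with h | h
            · exact absurd h h2s
            · exact h
          have h4s : s₄ ≠ 0 := hs' h3s
          exact ⟨s₄ / s₂, div_ne_zero h4s h2s, by rw [h3s, h1s, mul_zero],
            (div_mul_cancel₀ _ h2s).symm⟩
        · refine ⟨s₃ / s₁, fun h0 => ?_, by field_simp, by field_simp; linear_combination -hσ⟩
          have h3s : s₃ = 0 := by
            rcases div_eq_zero_iff.mp h0 with h | h
            · exact h
            · exact absurd h h1s
          have h4s : s₄ = 0 := by
            have h40 : s₁ * s₄ = 0 := by linear_combination -hσ + s₂ * h3s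
            rcases mul_eq_zero.mp h40 with h | h
            · exact absurd h h1s
            · exact h
          exact hs' h3s h4s
      set μ := d⁻¹ * (l * c) with hμ
      have hqp : C t₄ * f + C t₃ * g = C μ * (C t₂ * f + C t₁ * g) := by
        apply mul_left_cancel₀ (show (C d : MvPolynomial (Fin 2) k) ≠ 0 from C_ne_zero.mpr hd0)
        rw [← hr']
        have hr'r : C s₄ * F + C s₃ * G = C l * (C s₂ * F + C s₁ * G) := by
          rw [hl3, hl4, map_mul, map_mul]; ring
        rw [hr'r, hr, ← mul_assoc, ← mul_assoc, ← map_mul, ← map_mul]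
        congr 1
        rw [hμ]
        field_simp
      have hab : ¬(t₄ - μ * t₂ = 0 ∧ t₃ - μ * t₁ = 0) := by
        rintro ⟨ha, hb⟩
        exact hdet (by linear_combination t₁ * ha - t₂ * hb)
      have hkey : C (t₄ - μ * t₂) * f = C (μ * t₁ - t₃) * g := by
        simp only [map_sub, map_mul]
        linear_combination hqp
      obtain ⟨α, β, hfC, hgC⟩ : ∃ α β : k, f = C α ∧ g = C β := by
        rcases eq_or_ne (t₄ - μ * t₂) 0 with ha | ha
        · have hb : t₃ - μ * t₁ ≠ 0 := fun hb => hab ⟨ha, hb⟩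
          have hg0 : g = 0 := by
            have h0 : C (μ * t₁ - t₃) * g = 0 := by rw [← hkey, ha, map_zero, zero_mul]
            rcases mul_eq_zero.mp h0 with h | h
            · refine absurd (C_eq_zero.mp h) fun hh => hb (by linear_combination -hh)
            · exact h
          have hfu : IsUnit f := hfg dvd_rfl (by rw [hg0]; exact dvd_zero f)
          obtain ⟨γ, _, hfC⟩ := aux_isUnit hfu
          exact ⟨γ, 0, hfC, by rw [hg0, map_zero]⟩
        · have hgd : g ∣ f := by
            refine ⟨C ((μ * t₁ - t₃) / (t₄ - μ * t₂)), ?_⟩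
            apply mul_left_cancel₀ (show (C (t₄ - μ * t₂) : MvPolynomial (Fin 2) k) ≠ 0 from
              C_ne_zero.mpr ha)
            rw [hkey, mul_comm g (C ((μ * t₁ - t₃) / (t₄ - μ * t₂))), ← mul_assoc, ← map_mul]
            congr 2
            field_simp
          have hgu : IsUnit g := hfg hgd dvd_rfl
          obtain ⟨β, hβ0, hgC⟩ := aux_isUnit hgu
          refine ⟨(t₄ - μ * t₂)⁻¹ * ((μ * t₁ - t₃) * β), β, ?_, hgC⟩
          have hf2 : f = (t₄ - μ * t₂)⁻¹ • (C (t₄ - μ * t₂) * f) := by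
            rw [← smul_eq_C_mul f (t₄ - μ * t₂), smul_smul, inv_mul_cancel₀ ha, one_smul]
          rw [hf2, hkey, hgC, ← map_mul, smul_eq_C_mul, ← map_mul]
      have hFf : F = f := by rw [hFdef, hfC, aux_fix]
      have hGg : G = g := by rw [hGdef, hgC, aux_fix]
      exact ⟨hFf ▸ hfM, hGg ▸ hgM⟩
    · -- generic case
      have hFM : F ∈ M := by
        have h4 : F = ((s₂*s₃ - s₁*s₄)⁻¹ * s₃) • (C s₂ * F + C s₁ * G)
            - ((s₂*s₃ - s₁*s₄)⁻¹ * s₁) • (C s₄ * F + C s₃ * G) := by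
          simp only [← smul_eq_C_mul]
          match_scalars <;> field_simp <;> ring
        rw [h4]
        exact sub_mem (Submodule.smul_mem _ _ hrM) (Submodule.smul_mem _ _ hr'M)
      have hGM : G ∈ M := by
        have h4 : G = ((s₂*s₃ - s₁*s₄)⁻¹ * s₂) • (C s₄ * F + C s₃ * G)
            - ((s₂*s₃ - s₁*s₄)⁻¹ * s₄) • (C s₂ * F + C s₁ * G) := by
          simp only [← smul_eq_C_mul]
          match_scalars <;> field_simp <;> ring
        rw [h4]
        exact sub_mem (Submodule.smul_mem _ _ hr'M) (Submodule.smul_mem _ _ hrM)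
      exact ⟨hFM, hGM⟩
  obtain ⟨hFM, hGM⟩ := hFGM
  constructor
  · apply le_antisymm
    · rw [hMdef, Submodule.span_le]
      rintro x hx
      simp only [Set.mem_insert_iff, Set.mem_singleton_iff] at hx
      rcases hx with rfl | rfl
      · exact hfN
      · exact hgN
    · rw [hNdef, Submodule.span_le]
      rintro x hx
      simp only [Set.mem_insert_iff, Set.mem_singleton_iff] at hx
      rcases hx with rfl | rfl
      · exact hFM
      · exact hGM
  · obtain ⟨a₁, a₂, hFeq⟩ := Submodule.mem_span_pair.mp hFM
    obtain ⟨a₃, a₄, hGeq⟩ := Submodule.mem_span_pair.mp hGM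
    exact ⟨a₁, a₂, a₃, a₄, by rw [← hFeq, smul_eq_C_mul, smul_eq_C_mul],
      by rw [← hGeq, smul_eq_C_mul, smul_eq_C_mul]⟩
end

section
/- Let k be a field and let a, b ∈ kˣ be elements that are not roots of unity. Suppose that there exist no nonzero integers r₁ and r₂ such that a^{r₁} = b^{r₂}. Then the set {(aⁿ, bⁿ) : n ∈ ℕ} is Zariski dense in k²; that is, any polynomial f ∈ k[x,y] satisfying f(aⁿ, bⁿ) = 0 for all n ∈ ℕ is the zero polynomial. -/
open MvPolynomial

private lemma zpow_ne_one_aux {k : Type*} [Field k] (a : kˣ)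
    (ha : ∀ m : ℕ, 0 < m → a ^ m ≠ 1) : ∀ z : ℤ, a ^ z = 1 → z = 0 := by
  intro z hz
  by_contra h
  have hpos : (0 : ℤ) < z.natAbs := by
    simpa [Int.natAbs_pos] using h
  have : a ^ (z.natAbs : ℕ) = 1 := by
    rcases Int.natAbs_eq z with he | he
    · rw [← zpow_natCast, ← he, hz]
    · rw [← zpow_natCast]
      have : (z.natAbs : ℤ) = -z := by omega
      rw [this, zpow_neg, hz, inv_one]
  exact ha z.natAbs (by exact_mod_cast hpos) this

theorem stmt12 {k : Type*} [Field k] (a b : kˣ)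
    (ha : ∀ m : ℕ, 0 < m → a ^ m ≠ 1) (hb : ∀ m : ℕ, 0 < m → b ^ m ≠ 1)
    (hab : ∀ r₁ r₂ : ℤ, r₁ ≠ 0 → r₂ ≠ 0 → a ^ r₁ ≠ b ^ r₂)
    (f : MvPolynomial (Fin 2) k)
    (hf : ∀ n : ℕ, eval ![(a : k) ^ n, (b : k) ^ n] f = 0) :
    f = 0 := by
  classical
  -- the unit attached to a monomial
  set u : (Fin 2 →₀ ℕ) → kˣ := fun d => a ^ (d 0) * b ^ (d 1) with hu
  have hu_inj : Function.Injective u := by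
    intro d d' h
    have key : a ^ ((d 0 : ℤ) - (d' 0 : ℤ)) = b ^ ((d' 1 : ℤ) - (d 1 : ℤ)) := by
      have h' : a ^ ((d 0 : ℤ)) * b ^ ((d 1 : ℤ)) = a ^ ((d' 0 : ℤ)) * b ^ ((d' 1 : ℤ)) := by
        simpa [hu, zpow_natCast] using h
      rw [zpow_sub, zpow_sub, ← div_eq_mul_inv, ← div_eq_mul_inv, div_eq_div_iff_mul_eq_mul]
      exact h'.trans (mul_comm _ _)
    have h02 : (d 0 : ℤ) = d' 0 ∧ (d 1 : ℤ) = d' 1 := by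
      by_cases h1 : (d 0 : ℤ) - d' 0 = 0
      · have : b ^ ((d' 1 : ℤ) - (d 1 : ℤ)) = 1 := by
          rw [← key, h1, zpow_zero]
        have := zpow_ne_one_aux b hb _ this
        constructor <;> omega
      · by_cases h2 : (d' 1 : ℤ) - d 1 = 0
        · exfalso
          apply h1
          apply zpow_ne_one_aux a ha
          rw [key, h2, zpow_zero]
        · exact absurd key (hab _ _ h1 h2)
    ext i
    fin_cases i
    · exact_mod_cast h02.1
    · exact_mod_cast h02.2
  -- characters n ↦ (u d)^n
  set χ : (Fin 2 →₀ ℕ) → (Multiplicative ℕ →* k) :=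
    fun d => powersHom k ((u d : k)) with hχ
  have hχ_inj : Function.Injective χ := by
    intro d d' h
    apply hu_inj
    have := congrArg (fun g : Multiplicative ℕ →* k => g (Multiplicative.ofAdd 1)) h
    simp only [hχ, powersHom_apply, toAdd_ofAdd, pow_one] at this
    exact Units.ext this
  have hli : LinearIndependent k (fun d : Fin 2 →₀ ℕ => ((χ d : Multiplicative ℕ → k))) :=
    (linearIndependent_monoidHom (Multiplicative ℕ) k).comp χ hχ_inj
  have hsum : ∑ d ∈ f.support, coeff d f • ((χ d : Multiplicative ℕ → k)) = 0 := by
    funext n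
    have := hf n.toAdd
    rw [eval_eq'] at this
    simpa [hχ, hu, Fin.prod_univ_two, Units.val_mul, Units.val_pow_eq_pow_val,
      mul_pow, ← pow_mul, mul_comm, smul_eq_mul, Finset.sum_apply] using this
  have hcoeff := linearIndependent_iff'.1 hli f.support (fun d => coeff d f) hsum
  ext d
  by_cases hd : d ∈ f.support
  · simpa using hcoeff d hd
  · simpa using notMem_support_iff.1 hd
end

section
/- Let k be a field of characteristic 0 and let a ∈ kˣ be an element that is not a root of unity. Then the set {(n·1_k, aⁿ) : n ∈ ℕ} is Zariski dense in k²; that is, any polynomial f ∈ k[x,y] satisfying f(n·1_k, aⁿ) = 0 for all n ∈ ℕ is the zero polynomial. -/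
open Polynomial Finset

-- a polynomial vanishing on all naturals is zero
lemma vanish_nat {k : Type*} [Field k] [CharZero k] (P : Polynomial k)
    (h : ∀ n : ℕ, P.eval (n : k) = 0) : P = 0 := by
  apply P.eq_zero_of_infinite_isRoot
  exact Set.infinite_of_injective_forall_mem (f := fun n : ℕ => (n : k))
    Nat.cast_injective (fun n => h n)

lemma key {k : Type*} [Field k] [CharZero k] (N : ℕ) :
    ∀ (s : Finset kˣ) (p : kˣ → Polynomial k),
      s.card + (∑ b ∈ s, (p b).natDegree) ≤ N →
      (∀ n : ℕ, ∑ b ∈ s, (p b).eval (n : k) * (b : k) ^ n = 0) →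
      ∀ b ∈ s, p b = 0 := by
  induction N with
  | zero =>
    intro s p hN _ b hb
    have : s.card = 0 := by omega
    simp [Finset.card_eq_zero.mp this] at hb
  | succ N ih =>
    intro s p hN hsum
    classical
    obtain rfl | ⟨b0, hb0⟩ := s.eq_empty_or_nonempty
    · simp
    by_cases hp0 : p b0 = 0
    · -- drop b0
      have hsum' : ∀ n : ℕ, ∑ b ∈ s.erase b0, (p b).eval (n : k) * (b : k) ^ n = 0 := by
        intro n
        have := hsum n
        rwa [← Finset.add_sum_erase _ _ hb0, hp0, Polynomial.eval_zero, zero_mul, zero_add] at this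
      have hN' : (s.erase b0).card + (∑ b ∈ s.erase b0, (p b).natDegree) ≤ N := by
        have hc : (s.erase b0).card = s.card - 1 := Finset.card_erase_of_mem hb0
        have hle : (∑ b ∈ s.erase b0, (p b).natDegree) ≤ ∑ b ∈ s, (p b).natDegree :=
          Finset.sum_le_sum_of_subset (Finset.erase_subset _ _)
        have : 1 ≤ s.card := Finset.card_pos.mpr ⟨b0, hb0⟩
        omega
      have hres := ih _ _ hN' hsum'
      intro b hb
      by_cases hbb : b = b0
      · exact hbb ▸ hp0
      · exact hres b (Finset.mem_erase.mpr ⟨hbb, hb⟩)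
    · -- difference operator
      set q : kˣ → Polynomial k :=
        fun b => C (b : k) * (p b).comp (X + C 1) - C (b0 : k) * p b with hq
      have hq_eval : ∀ (n : ℕ) (b : kˣ),
          (q b).eval (n : k) = (b : k) * (p b).eval ((n+1 : ℕ) : k) - (b0 : k) * (p b).eval (n : k) := by
        intro n b
        push_cast
        simp [hq, Polynomial.eval_comp]
      have hqsum : ∀ n : ℕ, ∑ b ∈ s, (q b).eval (n : k) * (b : k) ^ n = 0 := by
        intro n
        have h1 := hsum (n + 1)
        have h2 := hsum n
        calc ∑ b ∈ s, (q b).eval (n : k) * (b : k) ^ n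
            = ∑ b ∈ s, ((p b).eval ((n+1 : ℕ) : k) * (b : k) ^ (n+1)
                - (b0 : k) * ((p b).eval (n : k) * (b : k) ^ n)) := by
              apply Finset.sum_congr rfl
              intro b _
              rw [hq_eval]
              ring
          _ = 0 := by
              rw [Finset.sum_sub_distrib, ← Finset.mul_sum, h1, h2, mul_zero, sub_zero]
      -- degree facts
      have hqdegle : ∀ b, (q b).natDegree ≤ (p b).natDegree := by
        intro b
        apply le_trans (Polynomial.natDegree_sub_le _ _)
        apply max_le
        · refine le_trans (Polynomial.natDegree_mul_le) ?_
          rw [Polynomial.natDegree_C, Polynomial.natDegree_comp, Polynomial.natDegree_X_add_C]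
          simp
        · apply le_trans (Polynomial.natDegree_mul_le)
          simp
      have hqne : ∀ b, b ≠ b0 → p b ≠ 0 → q b ≠ 0 := by
        intro b hbb hpb
        have hcoeff : (q b).coeff (p b).natDegree = ((b : k) - (b0 : k)) * (p b).leadingCoeff := by
          have hX1 : (X + C 1 : Polynomial k).natDegree = 1 := Polynomial.natDegree_X_add_C 1
          have h1 : (C (b : k) * (p b).comp (X + C 1)).coeff (p b).natDegree
              = (b : k) * (p b).leadingCoeff := by
            rw [Polynomial.coeff_C_mul]
            congr 1
            have hdc : ((p b).comp (X + C 1)).natDegree = (p b).natDegree := by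
              rw [Polynomial.natDegree_comp, hX1, mul_one]
            have hlc : ((p b).comp (X + C 1)).leadingCoeff = (p b).leadingCoeff := by
              rw [Polynomial.leadingCoeff_comp (by rw [hX1]; norm_num),
                Polynomial.leadingCoeff_X_add_C, one_pow, mul_one]
            rw [← hdc, ← Polynomial.coeff_natDegree]
            exact hlc
          have h2 : (C (b0 : k) * p b).coeff (p b).natDegree = (b0 : k) * (p b).leadingCoeff := by
            rw [Polynomial.coeff_C_mul]; rfl
          rw [Polynomial.coeff_sub, h1, h2]
          ring
        intro hq0
        rw [hq0] at hcoeff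
        simp only [Polynomial.coeff_zero] at hcoeff
        have hbb' : (b : k) - (b0 : k) ≠ 0 :=
          sub_ne_zero.mpr (fun h => hbb (Units.ext h))
        have := mul_eq_zero.mp hcoeff.symm
        rcases this with h | h
        · exact hbb' h
        · exact hpb (Polynomial.leadingCoeff_eq_zero.mp h)
      -- conclude p b = 0 for b ≠ b0 given q b = 0 on s
      -- and derive contradiction with hp0
      have final : ∀ (t : Finset kˣ), (∀ b ∈ t, q b = 0) → (s.erase b0 ⊆ t) → False := by
        intro t hqz hsub
        have hpz : ∀ b ∈ s, b ≠ b0 → p b = 0 := by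
          intro b hb hbb
          by_contra hpb
          exact hqne b hbb hpb (hqz b (hsub (Finset.mem_erase.mpr ⟨hbb, hb⟩)))
        have hone : ∀ n : ℕ, (p b0).eval (n : k) * (b0 : k) ^ n = 0 := by
          intro n
          have := hsum n
          rwa [Finset.sum_eq_single_of_mem b0 hb0
            (fun b hb hbb => by rw [hpz b hb hbb]; simp)] at this
        have : p b0 = 0 := by
          apply vanish_nat
          intro n
          have := hone n
          have hb0n : (b0 : k) ^ n ≠ 0 := pow_ne_zero _ (Units.ne_zero b0)
          exact (mul_eq_zero.mp this).resolve_right hb0n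
        exact hp0 this
      by_cases hd : (p b0).natDegree = 0
      · -- p b0 is a nonzero constant; q b0 = 0
        have hqb0 : q b0 = 0 := by
          obtain ⟨c, hc⟩ : ∃ c, p b0 = C c := ⟨_, Polynomial.eq_C_of_natDegree_eq_zero hd⟩
          simp [hq, hc]
        have hsum' : ∀ n : ℕ, ∑ b ∈ s.erase b0, (q b).eval (n : k) * (b : k) ^ n = 0 := by
          intro n
          have := hqsum n
          rwa [← Finset.add_sum_erase _ _ hb0, hqb0, Polynomial.eval_zero, zero_mul, zero_add]
            at this
        have hN' : (s.erase b0).card + (∑ b ∈ s.erase b0, (q b).natDegree) ≤ N := by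
          have hc : (s.erase b0).card = s.card - 1 := Finset.card_erase_of_mem hb0
          have hle : (∑ b ∈ s.erase b0, (q b).natDegree) ≤ ∑ b ∈ s, (p b).natDegree := by
            apply le_trans (Finset.sum_le_sum (fun b _ => hqdegle b))
            exact Finset.sum_le_sum_of_subset (Finset.erase_subset _ _)
          have : 1 ≤ s.card := Finset.card_pos.mpr ⟨b0, hb0⟩
          omega
        have hres := ih _ _ hN' hsum'
        exact absurd (final _ hres (le_refl _)) not_false
      · -- p b0 has positive degree; q b0 has smaller degree
        have hqb0lt : (q b0).natDegree < (p b0).natDegree := by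
          have hX1 : (X + C 1 : Polynomial k).natDegree = 1 := Polynomial.natDegree_X_add_C 1
          have hqb0 : q b0 = C (b0 : k) * ((p b0).comp (X + C 1) - p b0) := by
            rw [hq]; ring
          have hdc : ((p b0).comp (X + C 1)).natDegree = (p b0).natDegree := by
            rw [Polynomial.natDegree_comp, hX1, mul_one]
          have hlc : ((p b0).comp (X + C 1)).leadingCoeff = (p b0).leadingCoeff := by
            rw [Polynomial.leadingCoeff_comp (by rw [hX1]; norm_num),
              Polynomial.leadingCoeff_X_add_C, one_pow, mul_one]
          have hcompne : (p b0).comp (X + C 1) ≠ 0 := by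
            intro h
            rw [h, Polynomial.leadingCoeff_zero] at hlc
            exact hp0 (Polynomial.leadingCoeff_eq_zero.mp hlc.symm)
          have hdeq : ((p b0).comp (X + C 1)).degree = (p b0).degree := by
            rw [Polynomial.degree_eq_natDegree hcompne, Polynomial.degree_eq_natDegree hp0, hdc]
          have hsub : ((p b0).comp (X + C 1) - p b0).natDegree < (p b0).natDegree := by
            by_cases h0 : (p b0).comp (X + C 1) - p b0 = 0
            · rw [h0, Polynomial.natDegree_zero]; omega
            · apply Polynomial.natDegree_lt_natDegree h0
              have := Polynomial.degree_sub_lt hdeq hcompne hlc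
              rwa [hdeq] at this
          calc (q b0).natDegree ≤ ((p b0).comp (X + C 1) - p b0).natDegree := by
                rw [hqb0]
                apply le_trans Polynomial.natDegree_mul_le
                simp
            _ < _ := hsub
        have hN' : s.card + (∑ b ∈ s, (q b).natDegree) ≤ N := by
          have h1 : (∑ b ∈ s, (q b).natDegree) < ∑ b ∈ s, (p b).natDegree := by
            apply Finset.sum_lt_sum (fun b _ => hqdegle b) ⟨b0, hb0, hqb0lt⟩
          omega
        have hres := ih _ _ hN' hqsum
        exact absurd (final _ hres (Finset.erase_subset _ _)) not_false

open MvPolynomial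

theorem stmt13 {k : Type*} [Field k] [CharZero k] (a : kˣ)
    (ha : ∀ m : ℕ, 0 < m → a ^ m ≠ 1)
    (f : MvPolynomial (Fin 2) k)
    (hf : ∀ n : ℕ, eval ![(n : k), (a : k) ^ n] f = 0) :
    f = 0 := by
  classical
  -- swap the variables
  set g : MvPolynomial (Fin 2) k := rename (Equiv.swap (0 : Fin 2) 1) f with hgdef
  have hg : ∀ n : ℕ, eval ![(a : k) ^ n, (n : k)] g = 0 := by
    intro n
    have hv : (![(a : k) ^ n, (n : k)] ∘ (Equiv.swap (0 : Fin 2) 1)) = ![(n : k), (a : k) ^ n] := by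
      funext i
      fin_cases i <;> simp [Equiv.swap_apply_left, Equiv.swap_apply_right]
    rw [hgdef, eval_rename, hv]
    exact hf n
  set G : Polynomial (MvPolynomial (Fin 1) k) := finSuccEquiv k 1 g with hGdef
  have hGev : ∀ n : ℕ,
      Polynomial.eval ((a : k) ^ n) (G.map (eval ![(n : k)])) = 0 := by
    intro n
    have h := eval_eq_eval_mv_eval' ![(n : k)] ((a : k) ^ n) g
    have h2 : (Fin.cons ((a : k) ^ n) ![(n : k)] : Fin 2 → k) = ![(a : k) ^ n, (n : k)] := rfl
    rw [h2, hg n] at h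
    exact h.symm
  -- the inner coefficient ring hom to k[X]
  set h : MvPolynomial (Fin 1) k →+* Polynomial k :=
    (Polynomial.mapRingHom (eval (![] : Fin 0 → k))).comp
      (finSuccEquiv k 0 : MvPolynomial (Fin 1) k →+* Polynomial (MvPolynomial (Fin 0) k))
    with hhdef
  have heq : ∀ c, h c = Polynomial.map (eval (![] : Fin 0 → k)) ((finSuccEquiv k 0) c) :=
    fun _ => rfl
  have hevinj : Function.Injective (MvPolynomial.eval (![] : Fin 0 → k)) := by
    intro c d hcd
    rw [eq_C_of_isEmpty c, eq_C_of_isEmpty d] at hcd ⊢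
    rw [MvPolynomial.eval_C, MvPolynomial.eval_C] at hcd
    rw [hcd]
  have hhinj : Function.Injective h := by
    intro c d hcd
    rw [heq, heq] at hcd
    exact (finSuccEquiv k 0).injective (Polynomial.map_injective _ hevinj hcd)
  have heval : ∀ (c : MvPolynomial (Fin 1) k) (n : ℕ),
      Polynomial.eval (n : k) (h c) = eval ![(n : k)] c := by
    intro c n
    have h1 := eval_eq_eval_mv_eval' (![] : Fin 0 → k) ((n : k)) c
    have h2 : (Fin.cons ((n : k)) (![] : Fin 0 → k) : Fin 1 → k) = ![(n : k)] := rfl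
    rw [h2] at h1
    rw [heq]
    exact h1.symm
  set F : Polynomial (Polynomial k) := G.map h with hFdef
  have hFsum : ∀ n : ℕ,
      ∑ j ∈ Finset.range (G.natDegree + 1),
        (F.coeff j).eval (n : k) * ((a : k) ^ j) ^ n = 0 := by
    intro n
    have hlt : (G.map (eval ![(n : k)])).natDegree < G.natDegree + 1 :=
      Nat.lt_succ_of_le Polynomial.natDegree_map_le
    have := hGev n
    rw [Polynomial.eval_eq_sum_range' hlt] at this
    rw [← this]
    apply Finset.sum_congr rfl
    intro j _
    rw [Polynomial.coeff_map, Polynomial.coeff_map, heval, ← pow_mul, ← pow_mul, Nat.mul_comm]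
  -- injectivity of j ↦ a ^ j
  have hainj : Function.Injective (fun j : ℕ => a ^ j) := by
    have key2 : ∀ i j : ℕ, i < j → a ^ i ≠ a ^ j := by
      intro i j hlt hij
      apply ha (j - i) (by omega)
      have h1 : a ^ (j - i) * a ^ i = a ^ j := by rw [← pow_add]; congr 1; omega
      rw [← hij] at h1
      have h2 : a ^ (j - i) * a ^ i = 1 * a ^ i := by rw [h1, one_mul]
      exact mul_right_cancel h2
    intro i j hij
    rcases lt_trichotomy i j with hlt | heq | hgt
    · exact absurd hij (key2 i j hlt)
    · exact heq
    · exact absurd hij.symm (key2 j i hgt)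
  set r : Finset ℕ := Finset.range (G.natDegree + 1) with hrdef
  set p : kˣ → Polynomial k := fun b => ∑ j ∈ r.filter (fun j => a ^ j = b), F.coeff j with hpdef
  have hpj : ∀ j ∈ r, p (a ^ j) = F.coeff j := by
    intro j hj
    have hfil : r.filter (fun j' => a ^ j' = a ^ j) = {j} := by
      ext j'
      simp only [Finset.mem_filter, Finset.mem_singleton]
      constructor
      · rintro ⟨_, hj'⟩; exact hainj hj'
      · rintro rfl; exact ⟨hj, rfl⟩
    rw [hpdef]
    simp only
    rw [hfil, Finset.sum_singleton]
  set sfin : Finset kˣ := r.image (fun j => a ^ j) with hsdef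
  have hsum : ∀ n : ℕ, ∑ b ∈ sfin, (p b).eval (n : k) * (b : k) ^ n = 0 := by
    intro n
    rw [hsdef, Finset.sum_image (fun i _ j _ hij => hainj hij)]
    rw [← hFsum n]
    apply Finset.sum_congr rfl
    intro j hj
    rw [hpj j hj]
    norm_cast
  have hall := key (sfin.card + ∑ b ∈ sfin, (p b).natDegree) sfin p le_rfl hsum
  have hF0 : F = 0 := by
    apply Polynomial.ext
    intro j
    rw [Polynomial.coeff_zero]
    by_cases hj : j ∈ r
    · rw [← hpj j hj]
      exact hall _ (Finset.mem_image_of_mem _ hj)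
    · apply Polynomial.coeff_eq_zero_of_natDegree_lt
      apply lt_of_le_of_lt (Polynomial.natDegree_map_le)
      rw [hrdef] at hj
      simp only [Finset.mem_range, not_lt] at hj
      omega
  have hG0 : G = 0 := by
    apply Polynomial.map_injective h hhinj
    rw [← hFdef, hF0, Polynomial.map_zero]
  have hg0 : g = 0 := by
    apply (finSuccEquiv k 1).injective
    rw [← hGdef, hG0, map_zero]
  have hr := rename_injective (R := k) (⇑(Equiv.swap (0 : Fin 2) 1)) (Equiv.injective _)
  apply hr
  rw [← hgdef, hg0, map_zero]
end

section
/- Let k be an algebraically closed field of characteristic 0, and let φ be the k-algebra automorphism of k[x,y] with φ(x) = a x + P(y) and φ(y) = b y + c, where a, b ∈ kˣ are roots of unity, c ∈ k, P ∈ k[y] with deg P ≤ n. Assume that b ≠ 1, or that (b, c) = (1, 0). If a ∉ {1, b, b², …, bⁿ}, then φ has finite order in the automorphism group of k[x,y]. -/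
open Polynomial in
private lemma aux_shift15 {k : Type*} [Field k] (P : k[X]) (d e : k) :
    P.comp (C e * X + C (d * (e - 1)))
      = ((P.comp (X - C d)).comp (C e * X)).comp (X + C d) := by
  rw [comp_assoc, comp_assoc]
  congr 1
  simp only [mul_comp, C_comp, X_comp, sub_comp, add_comp, mul_add]
  rw [← C_mul, add_sub_assoc, ← C_sub]
  congr 2
  ring

open Polynomial in
private lemma aux_coeff_comp15 {k : Type*} [Field k] (p : k[X]) (e : k) (i : ℕ) :
    (p.comp (C e * X)).coeff i = p.coeff i * e ^ i := by
  induction p using Polynomial.induction_on' with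
  | add p q hp hq => simp [add_comp, hp, hq, add_mul]
  | monomial m r =>
      rw [← C_mul_X_pow_eq_monomial, mul_comp, C_comp, pow_comp, X_comp, mul_pow,
        ← mul_assoc, ← C_pow, ← C_mul, coeff_C_mul_X_pow, coeff_C_mul_X_pow]
      by_cases h : i = m <;> simp [h]

private lemma aux_geom15 {k : Type*} [Field k] (A B' : k) (hA : A ≠ 0) (hne : A ≠ B') (M : ℕ)
    (hAM : A ^ M = 1) (hBM : B' ^ M = 1) :
    ∑ t ∈ Finset.range M, A ^ (M - 1 - t) * B' ^ t = 0 := by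
  have hr : B' / A ≠ 1 := by
    intro h
    rw [div_eq_one_iff_eq hA] at h
    exact hne h.symm
  have h1 : ∀ t ∈ Finset.range M, A ^ (M - 1 - t) * B' ^ t = A ^ (M - 1) * (B' / A) ^ t := by
    intro t ht
    rw [pow_sub₀ _ hA (by simp at ht; omega), div_pow]
    ring
  rw [Finset.sum_congr rfl h1, ← Finset.mul_sum, geom_sum_eq hr]
  rw [div_pow, hAM, hBM]
  simp

noncomputable def auxQ15 {k : Type*} [Field k] (A B d : k) (P : Polynomial k) : ℕ → Polynomial k
  | 0 => 0
  | (j + 1) => Polynomial.C A * auxQ15 A B d P j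
      + P.comp (Polynomial.C (B ^ j) * Polynomial.X + Polynomial.C (d * (B ^ j - 1)))

open Polynomial in
private lemma auxQ15_closed {k : Type*} [Field k] (A B d : k) (P : k[X]) (j : ℕ) :
    auxQ15 A B d P j = ∑ t ∈ Finset.range j,
      C (A ^ (j - 1 - t)) * P.comp (C (B ^ t) * X + C (d * (B ^ t - 1))) := by
  induction j with
  | zero => simp [auxQ15]
  | succ j ih =>
      rw [auxQ15, ih, Finset.mul_sum, Finset.sum_range_succ]
      congr 1
      · apply Finset.sum_congr rfl
        intro t ht
        simp only [Finset.mem_range] at ht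
        rw [show j + 1 - 1 - t = (j - 1 - t) + 1 from by omega, pow_succ']
        simp [C_mul, mul_assoc]
      · simp

open Polynomial in
private lemma auxQ15_eq_zero {k : Type*} [Field k] (A B d : k) (P : k[X]) (n : ℕ)
    (hA : A ≠ 0) (hP : P.natDegree ≤ n) (M : ℕ) (hAM : A ^ M = 1) (hBM : B ^ M = 1)
    (hab : ∀ i : ℕ, i ≤ n → A ≠ B ^ i) :
    auxQ15 A B d P M = 0 := by
  set Pt := P.comp (X - C d) with hPtdef
  have hPt : Pt.natDegree ≤ n := by
    rw [hPtdef, natDegree_comp, natDegree_X_sub_C, mul_one]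
    exact hP
  have hS : (∑ t ∈ Finset.range M, C (A ^ (M - 1 - t)) * Pt.comp (C (B ^ t) * X)) = 0 := by
    ext i
    rw [finset_sum_coeff, coeff_zero]
    have h1 : ∀ t ∈ Finset.range M,
        (C (A ^ (M - 1 - t)) * Pt.comp (C (B ^ t) * X)).coeff i
          = Pt.coeff i * (A ^ (M - 1 - t) * (B ^ i) ^ t) := by
      intro t _
      rw [coeff_C_mul, aux_coeff_comp15, ← pow_mul, ← pow_mul, mul_comm t i]
      ring
    rw [Finset.sum_congr rfl h1, ← Finset.mul_sum]
    by_cases hi : i ≤ n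
    · rw [aux_geom15 A (B ^ i) hA (hab i hi) M hAM
        (by rw [← pow_mul, mul_comm, pow_mul, hBM, one_pow]), mul_zero]
    · rw [coeff_eq_zero_of_natDegree_lt (lt_of_le_of_lt hPt (by omega)), zero_mul]
  rw [auxQ15_closed]
  have h2 : ∀ t ∈ Finset.range M,
      C (A ^ (M - 1 - t)) * P.comp (C (B ^ t) * X + C (d * (B ^ t - 1)))
        = (C (A ^ (M - 1 - t)) * Pt.comp (C (B ^ t) * X)).comp (X + C d) := by
    intro t _
    rw [aux_shift15 P d (B ^ t), mul_comp, C_comp]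
  rw [Finset.sum_congr rfl h2, ← sum_comp, hS, zero_comp]

open MvPolynomial

theorem stmt15 {k : Type*} [Field k] [IsAlgClosed k] [CharZero k]
    (a b : kˣ) (c : k) (n : ℕ) (P : Polynomial k) (hP : P.natDegree ≤ n)
    (ha : ∃ m : ℕ, 0 < m ∧ a ^ m = 1) (hb : ∃ m : ℕ, 0 < m ∧ b ^ m = 1)
    (φ : MvPolynomial (Fin 2) k ≃ₐ[k] MvPolynomial (Fin 2) k)
    (hφx : φ (X 0) = C (a : k) * X 0 + Polynomial.aeval (X 1) P)
    (hφy : φ (X 1) = C (b : k) * X 1 + C c)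
    (hbc : (b : k) ≠ 1 ∨ ((b : k) = 1 ∧ c = 0))
    (hab : ∀ i : ℕ, i ≤ n → (a : k) ≠ (b : k) ^ i) :
    IsOfFinOrder φ := by
  obtain ⟨m1, hm1, ham⟩ := ha
  obtain ⟨m2, hm2, hbm⟩ := hb
  set A := (a : k) with hAdef
  set B := (b : k) with hBdef
  have hA0 : A ≠ 0 := Units.ne_zero a
  obtain ⟨d, hd⟩ : ∃ d : k, c = d * (B - 1) := by
    rcases hbc with h | ⟨h, hc⟩
    · exact ⟨c / (B - 1), (div_mul_cancel₀ _ (sub_ne_zero.mpr h)).symm⟩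
    · exact ⟨0, by simp [hc]⟩
  set M := m1 * m2 with hMdef
  have hM0 : 0 < M := Nat.mul_pos hm1 hm2
  have hAM : A ^ M = 1 := by
    rw [hAdef, ← Units.val_pow_eq_pow_val, hMdef, pow_mul, ham, one_pow, Units.val_one]
  have hBM : B ^ M = 1 := by
    rw [hBdef, ← Units.val_pow_eq_pow_val, hMdef, mul_comm, pow_mul, hbm, one_pow,
      Units.val_one]
  have hC : ∀ (j : ℕ) (r : k), (φ ^ j) (C r) = C r := fun j r => by
    simpa [MvPolynomial.algebraMap_eq] using (φ ^ j).commutes r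
  have key : ∀ j : ℕ, (φ ^ j) (X 1) = C (B ^ j) * X 1 + C (d * (B ^ j - 1)) ∧
      (φ ^ j) (X 0) = C (A ^ j) * X 0 + Polynomial.aeval (X 1) (auxQ15 A B d P j) := by
    intro j
    induction j with
    | zero => simp [auxQ15]
    | succ j ih =>
        obtain ⟨ihy, ihx⟩ := ih
        have happ : ∀ p, (φ ^ (j + 1)) p = (φ ^ j) (φ p) := by
          intro p; rw [pow_succ]; rfl
        constructor
        · rw [happ, hφy, map_add, map_mul, hC, hC, ihy, hd]
          simp only [map_mul, map_sub, map_pow, map_one]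
          ring
        · rw [happ, hφx, map_add, map_mul, hC, ihx]
          have haev : (φ ^ j) (Polynomial.aeval (X 1) P)
              = Polynomial.aeval ((φ ^ j) (X 1)) P := by
            simpa using (Polynomial.aeval_algHom_apply
              ((φ ^ j : _ ≃ₐ[k] _) : MvPolynomial (Fin 2) k →ₐ[k] MvPolynomial (Fin 2) k)
              (X 1) P).symm
          rw [haev, ihy]
          have hcomp : Polynomial.aeval (C (B ^ j) * X 1 + C (d * (B ^ j - 1))) P
              = Polynomial.aeval (X 1 : MvPolynomial (Fin 2) k)
                  (P.comp (Polynomial.C (B ^ j) * Polynomial.X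
                    + Polynomial.C (d * (B ^ j - 1)))) := by
            rw [Polynomial.aeval_comp]
            simp [MvPolynomial.algebraMap_eq]
          rw [hcomp, auxQ15]
          simp only [map_add, map_mul, map_sub, map_pow, map_one, Polynomial.aeval_C,
            MvPolynomial.algebraMap_eq]
          ring
  rw [isOfFinOrder_iff_pow_eq_one]
  refine ⟨M, hM0, ?_⟩
  have hQ := auxQ15_eq_zero A B d P n hA0 hP M hAM hBM hab
  have h0 : ((φ ^ M : MvPolynomial (Fin 2) k ≃ₐ[k] MvPolynomial (Fin 2) k) :
      MvPolynomial (Fin 2) k →ₐ[k] MvPolynomial (Fin 2) k) = AlgHom.id k _ := by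
    apply MvPolynomial.algHom_ext
    intro i
    fin_cases i
    · simpa [hAM, hQ] using (key M).2
    · simpa [hBM] using (key M).1
  apply AlgEquiv.ext
  intro p
  have := AlgHom.congr_fun h0 p
  simpa using this
end

section
/- Let k be an algebraically closed field of characteristic 0, and let a, b ∈ kˣ be elements that are not roots of unity such that there exist no nonzero integers r₁ and r₂ with a^{r₁} = b^{r₂}. Let φ̂ : k² → k² be the map φ̂(x, y) = (a x, b y). Then every Zariski-closed subset S ⊆ k² with φ̂(S) = S is one of the following six sets: ∅, {(0,0)}, {(x,y) : x = 0}, {(x,y) : y = 0}, {(x,y) : x y = 0}, or k². -/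
/-! The substitution `f(x, y) ↦ f(a x, b y)` preserves the vanishing ideal of `S` and multiplies
the monomial `x^i y^j` by `a^i b^j`. These eigenvalues are pairwise distinct because `a` and `b`
are multiplicatively independent, so the vanishing ideal, being invariant, is spanned by the
monomials it contains. Hence `S` is cut out by monomials, and the common zero set of any family of
monomials in two variables is one of the six listed sets. -/

open MvPolynomial

/-- A subset of the plane is Zariski closed if it is the common zero locus of an ideal of
polynomials. -/
def IsZariskiClosed {k : Type*} [Field k] (S : Set (Fin 2 → k)) : Prop :=
  ∃ I : Ideal (MvPolynomial (Fin 2) k), S = {p | ∀ f ∈ I, eval p f = 0}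

theorem Submodule.mem_of_sum_mem_of_eigenvectors {K M ι : Type*} [Field K] [AddCommGroup M]
    [Module K M] {p : Submodule K M} {f : Module.End K M} (hp : ∀ x ∈ p, f x ∈ p)
    {μ : ι → K} {v : ι → M} (hv : ∀ i, f (v i) = μ i • v i) {s : Finset ι}
    (hμ : Set.InjOn μ s) (hs : ∑ i ∈ s, v i ∈ p) : ∀ i ∈ s, v i ∈ p := by
  classical
  induction s using Finset.induction_on generalizing v with
  | empty => simp
  | insert j t hj ih =>
    rw [Finset.sum_insert hj] at hs
    have hμj : ∀ i ∈ t, μ i - μ j ≠ 0 := fun i hi =>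
      sub_ne_zero.mpr fun h => hj (hμ (by simp [hi]) (by simp) h ▸ hi)
    -- `f - μ j` kills `v j` and rescales every other `v i` by `μ i - μ j ≠ 0`.
    have hkill : ∑ i ∈ t, (μ i - μ j) • v i ∈ p := by
      have := p.sub_mem (hp _ hs) (p.smul_mem (μ j) hs)
      simpa [hv, Finset.smul_sum, sub_smul, smul_add, map_sum] using this
    have ht : ∀ i ∈ t, v i ∈ p := by
      intro i hi
      have := ih (v := fun i => (μ i - μ j) • v i) (fun i => by simp [hv, smul_comm (μ i)])
        (hμ.mono (by simp)) hkill i hi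
      simpa [smul_smul, hμj i hi] using p.smul_mem (μ i - μ j)⁻¹ this
    have hvj : v j ∈ p := by
      simpa using p.sub_mem hs (p.sum_mem ht)
    simpa [hvj] using ht

namespace MvPolynomial

section Scale

variable {σ R : Type*} [CommSemiring R]

noncomputable def scale (w : σ → R) : MvPolynomial σ R →ₐ[R] MvPolynomial σ R :=
  bind₁ fun i => C (w i) * X i

theorem scale_monomial (w : σ → R) (d : σ →₀ ℕ) (r : R) :
    scale w (monomial d r) = (d.prod fun i e => w i ^ e) • monomial d r := by
  rw [scale, bind₁_monomial, smul_monomial, smul_eq_mul, monomial_eq]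
  simp only [Finsupp.prod, mul_pow, Finset.prod_mul_distrib, ← C_pow, ← map_prod, C_mul]
  ring

theorem eval_scale (w x : σ → R) (f : MvPolynomial σ R) :
    eval x (scale w f) = eval (w * x) f := by
  refine (eval₂Hom_bind₁ _ x _ f).trans (congr_arg (eval · f) ?_)
  ext i
  simp [mul_comm]

end Scale

variable {σ k : Type*} [Field k]

theorem monomial_one_mem_of_scale_mem {I : Ideal (MvPolynomial σ k)} {w : σ → k}
    (hw : Function.Injective fun d : σ →₀ ℕ => d.prod fun i e => w i ^ e)
    (hI : ∀ f ∈ I, scale w f ∈ I) {f : MvPolynomial σ k} (hf : f ∈ I) {d : σ →₀ ℕ}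
    (hd : d ∈ f.support) : monomial d 1 ∈ I := by
  have hmon : monomial d (coeff d f) ∈ I :=
    Submodule.mem_of_sum_mem_of_eigenvectors (p := I.restrictScalars k)
      (f := (scale w).toLinearMap) (v := fun e => monomial e (coeff e f)) hI
      (fun e => scale_monomial w e _) hw.injOn
      (by rwa [Submodule.restrictScalars_mem, f.support_sum_monomial_coeff]) d hd
  simpa [C_mul_monomial, inv_mul_cancel₀ (mem_support_iff.mp hd)] using
    I.mul_mem_left (C (coeff d f)⁻¹) hmon

theorem eq_span_monomial_of_scale_mem {I : Ideal (MvPolynomial σ k)} {w : σ → k}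
    (hw : Function.Injective fun d : σ →₀ ℕ => d.prod fun i e => w i ^ e)
    (hI : ∀ f ∈ I, scale w f ∈ I) :
    I = Ideal.span ((fun d => monomial d 1) '' {d | monomial d 1 ∈ I}) := by
  refine le_antisymm (fun f hf => mem_ideal_span_monomial_image.mpr fun d hd =>
    ⟨d, monomial_one_mem_of_scale_mem hw hI hf hd, le_rfl⟩) ?_
  rw [Ideal.span_le]
  rintro _ ⟨d, hd, rfl⟩
  exact hd

theorem scale_mem_vanishingIdeal {S : Set (σ → k)} {w : σ → k} (hS : ∀ x ∈ S, w * x ∈ S)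
    {f : MvPolynomial σ k} (hf : f ∈ vanishingIdeal k S) : scale w f ∈ vanishingIdeal k S := by
  intro x hx
  simpa [coe_aeval_eq_eval, eval_scale] using hf _ (hS x hx)

end MvPolynomial

theorem zpow_mul_zpow_injective {G : Type*} [CommGroup G] {a b : G} (ha : ¬IsOfFinOrder a)
    (hb : ¬IsOfFinOrder b) (hab : ∀ r₁ r₂ : ℤ, r₁ ≠ 0 → r₂ ≠ 0 → a ^ r₁ ≠ b ^ r₂) :
    Function.Injective fun e : ℤ × ℤ => a ^ e.1 * b ^ e.2 := by
  rintro ⟨m, n⟩ ⟨m', n'⟩ h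
  have key : a ^ (m - m') = b ^ (n' - n) := by
    rw [zpow_sub, zpow_sub, ← div_eq_mul_inv, ← div_eq_mul_inv, div_eq_div_iff_mul_eq_mul]
    simpa [mul_comm] using h
  have ha' := injective_zpow_iff_not_isOfFinOrder.mpr ha
  have hb' := injective_zpow_iff_not_isOfFinOrder.mpr hb
  by_cases hm : m - m' = 0
  · have hn : n' - n = 0 := hb' (by simp only [← key, hm, zpow_zero])
    ext <;> dsimp <;> omega
  by_cases hn : n' - n = 0
  · exact absurd (ha' (by simp only [key, hn, zpow_zero])) hm
  exact absurd key (hab _ _ hm hn)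

theorem not_isOfFinOrder_of_pow_ne_one {G : Type*} [Monoid G] {a : G}
    (ha : ∀ m : ℕ, 0 < m → a ^ m ≠ 1) : ¬IsOfFinOrder a := fun h =>
  let ⟨m, hm, h1⟩ := isOfFinOrder_iff_pow_eq_one.mp h
  ha m hm h1

theorem Finsupp.prod_pow_fin_two {M : Type*} [CommMonoid M] (w : Fin 2 → M) (d : Fin 2 →₀ ℕ) :
    (d.prod fun i e => w i ^ e) = w 0 ^ d 0 * w 1 ^ d 1 := by
  rw [Finsupp.prod_pow, Fin.prod_univ_two]

theorem injective_prod_pow_fin_two {k : Type*} [Field k] {a b : kˣ} (ha : ¬IsOfFinOrder a)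
    (hb : ¬IsOfFinOrder b) (hab : ∀ r₁ r₂ : ℤ, r₁ ≠ 0 → r₂ ≠ 0 → a ^ r₁ ≠ b ^ r₂) :
    Function.Injective fun d : Fin 2 →₀ ℕ => d.prod fun i e => ![(a : k), (b : k)] i ^ e := by
  intro d e h
  simp only [Finsupp.prod_pow_fin_two] at h
  have := zpow_mul_zpow_injective ha hb hab (a₁ := ((d 0 : ℤ), (d 1 : ℤ)))
    (a₂ := ((e 0 : ℤ), (e 1 : ℤ))) (Units.ext (by simpa using h))
  ext i
  fin_cases i <;> simp_all

theorem setOf_forall_pow_mul_pow_eq_zero_cases {k : Type*} [Field k] (D : Set (Fin 2 →₀ ℕ))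
    (S : Set (Fin 2 → k)) (hS : S = {x | ∀ d ∈ D, x 0 ^ d 0 * x 1 ^ d 1 = 0}) :
    S = ∅ ∨ S = {p | p 0 = 0 ∧ p 1 = 0} ∨ S = {p | p 0 = 0} ∨ S = {p | p 1 = 0} ∨
      S = {p | p 0 * p 1 = 0} ∨ S = Set.univ := by
  subst hS
  simp only [Set.ext_iff, Set.mem_ofPred_eq, Set.mem_empty_iff_false, Set.mem_univ, mul_eq_zero,
    pow_eq_zero_iff']
  by_cases hone : ∃ d ∈ D, d 0 = 0 ∧ d 1 = 0
  · left; grind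
  by_cases hpow₀ : ∃ d ∈ D, d 1 = 0 <;> by_cases hpow₁ : ∃ d ∈ D, d 0 = 0
  · right; left; grind
  · right; right; left; grind
  · right; right; right; left; grind
  by_cases hD : D.Nonempty
  · right; right; right; right; left; grind [Set.Nonempty]
  · right; right; right; right; right; grind [Set.Nonempty]

theorem IsZariskiClosed.eq_zeroLocus_vanishingIdeal {k : Type*} [Field k] {S : Set (Fin 2 → k)}
    (hS : IsZariskiClosed S) : S = zeroLocus k (vanishingIdeal k S) := by
  obtain ⟨I, rfl⟩ := hS
  refine le_antisymm (zeroLocus_vanishingIdeal_le _) fun x hx f hf => ?_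
  simpa [coe_aeval_eq_eval] using hx f fun y hy => by simpa [coe_aeval_eq_eval] using hy f hf

theorem stmt17_general {k : Type*} [Field k]
    (a b : kˣ)
    (ha : ∀ m : ℕ, 0 < m → a ^ m ≠ 1) (hb : ∀ m : ℕ, 0 < m → b ^ m ≠ 1)
    (hab : ∀ r₁ r₂ : ℤ, r₁ ≠ 0 → r₂ ≠ 0 → a ^ r₁ ≠ b ^ r₂)
    (S : Set (Fin 2 → k)) (hS : IsZariskiClosed S)
    (hinv : (fun p : Fin 2 → k => ![(a : k) * p 0, (b : k) * p 1]) '' S = S) :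
    S = ∅ ∨ S = {p | p 0 = 0 ∧ p 1 = 0} ∨ S = {p | p 0 = 0} ∨ S = {p | p 1 = 0} ∨
      S = {p | p 0 * p 1 = 0} ∨ S = Set.univ := by
  have hw := injective_prod_pow_fin_two (k := k) (not_isOfFinOrder_of_pow_ne_one ha)
    (not_isOfFinOrder_of_pow_ne_one hb) hab
  have hSw : ∀ x ∈ S, ![(a : k), (b : k)] * x ∈ S := fun x hx =>
    hinv.subset ⟨x, hx, by ext i; fin_cases i <;> rfl⟩
  have hI := eq_span_monomial_of_scale_mem hw fun _ => scale_mem_vanishingIdeal hSw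
  refine setOf_forall_pow_mul_pow_eq_zero_cases {d | monomial d 1 ∈ vanishingIdeal k S} S ?_
  conv_lhs => rw [hS.eq_zeroLocus_vanishingIdeal, hI, zeroLocus_span]
  ext x
  simp [eval_monomial]

theorem stmt17 {k : Type*} [Field k] [IsAlgClosed k] [CharZero k]
    (a b : kˣ)
    (ha : ∀ m : ℕ, 0 < m → a ^ m ≠ 1) (hb : ∀ m : ℕ, 0 < m → b ^ m ≠ 1)
    (hab : ∀ r₁ r₂ : ℤ, r₁ ≠ 0 → r₂ ≠ 0 → a ^ r₁ ≠ b ^ r₂)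
    (S : Set (Fin 2 → k)) (hS : IsZariskiClosed S)
    (hinv : (fun p : Fin 2 → k => ![(a : k) * p 0, (b : k) * p 1]) '' S = S) :
    S = ∅ ∨ S = {p | p 0 = 0 ∧ p 1 = 0} ∨ S = {p | p 0 = 0} ∨ S = {p | p 1 = 0} ∨
      S = {p | p 0 * p 1 = 0} ∨ S = Set.univ :=
  stmt17_general a b ha hb hab S hS hinv
end

section
/- Let k be an algebraically closed field of characteristic 0, let a ∈ kˣ not be a root of unity, let c ∈ k with c ≠ 0, let P ∈ k[y], and let φ be the k-algebra automorphism of k[x,y] with φ(x) = a x + P(y) and φ(y) = y + c, with associated point map φ̂. Then there exists a polynomial h ∈ k[y] such that φ(x − h(y)) = a·(x − h(y)), and the curve C = {(x,y) ∈ k² : x = h(y)} is the unique Zariski-closed subset S ⊆ k² with φ̂(S) = S other than ∅ and k². In particular, the lattice of φ̂-invariant Zariski-closed subsets of k² consists of exactly three elements: ∅, the curve C (which is isomorphic to A¹), and k². -/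
/-!
Since `a ≠ 1`, the map `h ↦ h(y + c) - a h(y)` is injective and degree-preserving on `k[y]`, so
some `h` solves `h(y + c) - a h(y) = P(y)`. In the coordinates `u = x - h(y)` the point map becomes
`(u, y) ↦ (a u, y + c)`, and the orbit of `(u₀, v₀)` is the image of the points `(n, aⁿ)` under the
polynomial map `(s, t) ↦ (u₀ t, v₀ + s c)`. No nonzero polynomial vanishes at all `(n, aⁿ)`: this
is where char 0 and `a` not being a root of unity enter. So a closed invariant set containing
`(u₀, v₀)` contains the whole curve `u = 0`, and the whole plane if `u₀ ≠ 0`.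
-/

open MvPolynomial

/-- The point map associated with a `k`-algebra automorphism `σ` of `k[x,y]`:
`σ̂ p = ((σ x)(p), (σ y)(p))`. -/
noncomputable def pmap {k : Type*} [Field k]
    (σ : MvPolynomial (Fin 2) k ≃ₐ[k] MvPolynomial (Fin 2) k)
    (p : Fin 2 → k) : Fin 2 → k :=
  fun i => eval p (σ (X i))

open scoped Polynomial.Bivariate

namespace Polynomial

variable {R : Type*} [CommRing R]

theorem eq_of_smul_taylor_eq_smul [IsDomain R] {p : R[X]} (hp : p ≠ 0) {r b c : R}
    (h : b • taylor r p = c • p) : b = c := by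
  have := congrArg (coeff · p.natDegree) h
  simp only [coeff_smul, coeff_taylor_natDegree, smul_eq_mul] at this
  exact mul_right_cancel₀ (leadingCoeff_ne_zero.mpr hp) this

theorem natDegree_taylor_sub_lt [IsDomain R] {p : R[X]} {r : R} (h : taylor r p - p ≠ 0) :
    (taylor r p - p).natDegree < p.natDegree := by
  have hp : p ≠ 0 := by rintro rfl; simp at h
  refine natDegree_lt_natDegree h ?_
  rw [← degree_taylor p r]
  exact degree_sub_lt_left (degree_taylor p r) ((taylor_eq_zero r p).not.mpr hp)
    (leadingCoeff_taylor r p)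

theorem eq_zero_of_forall_eval_natCast [IsDomain R] [CharZero R] {p : R[X]}
    (h : ∀ n : ℕ, p.eval (n : R) = 0) : p = 0 :=
  eq_zero_of_infinite_isRoot p (Set.infinite_of_injective_forall_mem Nat.cast_injective h)

/-- `F(X, Y) ↦ F(X + 1, a * Y)`. -/
noncomputable def orbitShift (a : R) (F : R[X][Y]) : R[X][Y] :=
  (F.map (taylorAlgHom (1 : R)).toRingHom).comp (C (C a) * X)

theorem coeff_orbitShift (a : R) (F : R[X][Y]) (i : ℕ) :
    (orbitShift a F).coeff i = a ^ i • taylor 1 (F.coeff i) := by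
  rw [orbitShift, comp_C_mul_X_coeff, coeff_map, ← C_pow, smul_eq_C_mul, mul_comm]
  rfl

theorem evalEval_orbitShift (a : R) (F : R[X][Y]) (x y : R) :
    (orbitShift a F).evalEval x y = F.evalEval (x + 1) (a * y) := by
  have : (taylorAlgHom (1 : R)).toRingHom (C (a * y)) = C (a * y) := taylor_C _ _
  rw [orbitShift, evalEval, eval_comp, eval_map, eval_mul, eval_C, eval_X, ← C_mul, ← this,
    eval₂_at_apply]
  exact taylor_eval _ _ _

theorem eq_zero_of_forall_evalEval_natCast_pow [IsDomain R] [CharZero R] {a : R}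
    (ha : Function.Injective (a ^ · : ℕ → R)) {F : R[X][Y]}
    (hF : ∀ n : ℕ, F.evalEval (n : R) (a ^ n) = 0) : F = 0 := by
  -- Minimal counterexample for the lexicographic order on `(deg_Y F, deg_X (leadingCoeff F))`:
  -- `G = orbitShift a F - a ^ M • F` still vanishes at the points `(n, aⁿ)` and is smaller.
  induction hM : F.natDegree using Nat.strong_induction_on generalizing F with
  | _ M ihM =>
  induction hd : F.leadingCoeff.natDegree using Nat.strong_induction_on generalizing F with
  | _ d ihd =>
  by_contra hF0
  set G := orbitShift a F - a ^ M • F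
  have hGcoeff (i : ℕ) : G.coeff i = a ^ i • taylor 1 (F.coeff i) - a ^ M • F.coeff i := by
    simp only [G, coeff_sub, coeff_smul, coeff_orbitShift]
  have hGvanish (n : ℕ) : G.evalEval (n : R) (a ^ n) = 0 := by
    rw [evalEval_sub, evalEval_smul, evalEval_orbitShift, ← pow_succ', ← Nat.cast_succ, hF, hF,
      smul_zero, sub_zero]
  have hGdeg : G.natDegree ≤ M := natDegree_le_iff_coeff_eq_zero.mpr fun i hi => by
    rw [hGcoeff, coeff_eq_zero_of_natDegree_lt (hM ▸ hi), map_zero, smul_zero, smul_zero, sub_zero]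
  have hGtop : G.coeff M = a ^ M • (taylor 1 F.leadingCoeff - F.leadingCoeff) := by
    rw [hGcoeff, smul_sub, leadingCoeff, hM]
  have hG : G = 0 := by
    by_contra hG0
    by_cases hGM : G.coeff M = 0
    · refine hG0 (ihM _ (lt_of_le_of_ne hGdeg fun h => hG0 ?_) hGvanish rfl)
      rwa [← leadingCoeff_eq_zero, leadingCoeff, h]
    · have hGnat : G.natDegree = M := le_antisymm hGdeg (le_natDegree_of_ne_zero hGM)
      refine hG0 (ihd _ ?_ hGvanish hGnat rfl)
      rw [leadingCoeff, hGnat, hGtop, ← hd]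
      rw [hGtop] at hGM
      exact (natDegree_smul_le _ _).trans_lt (natDegree_taylor_sub_lt (right_ne_zero_of_smul hGM))
  have hlow (i : ℕ) (hi : i < M) : F.coeff i = 0 := by
    by_contra hqi
    refine hi.ne (ha (eq_of_smul_taylor_eq_smul (r := 1) hqi ?_))
    rw [← sub_eq_zero, ← hGcoeff, hG, coeff_zero]
  have hmono : F = C F.leadingCoeff * X ^ M := by
    ext1 i
    rw [coeff_C_mul_X_pow]
    rcases lt_trichotomy i M with h | rfl | h
    · rw [hlow i h, if_neg h.ne]
    · rw [if_pos rfl, leadingCoeff, hM]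
    · rw [coeff_eq_zero_of_natDegree_lt (hM ▸ h), if_neg h.ne']
  have ha0 : a ≠ 0 := by
    rintro rfl
    exact absurd (ha (show (0 : R) ^ 1 = 0 ^ 2 by simp)) (by norm_num)
  refine leadingCoeff_ne_zero.mpr hF0 (eq_zero_of_forall_eval_natCast fun n => ?_)
  have := hF n
  rw [hmono, evalEval_mul, evalEval_C, evalEval_pow, evalEval_X] at this
  exact (mul_eq_zero.mp this).resolve_right (pow_ne_zero _ (pow_ne_zero _ ha0))

theorem eval_add_eq_of_taylor_sub_smul_eq {a c : R} {h P : R[X]} (hh : taylor c h - a • h = P)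
    (t : R) : h.eval (t + c) = a * h.eval t + P.eval t := by
  rw [← hh, eval_sub, taylor_eval, eval_smul, smul_eq_mul]
  ring

theorem exists_taylor_sub_smul_eq {K : Type*} [Field K] {a : K} (ha : a ≠ 1) (r : K)
    (P : K[X]) : ∃ h : K[X], taylor r h - a • h = P := by
  set n := P.natDegree + 1
  let L : K[X]_n →ₗ[K] K[X]_n := (taylor r - a • LinearMap.id).restrict fun p hp => by
    simp only [LinearMap.sub_apply, LinearMap.smul_apply, LinearMap.id_apply]
    exact Submodule.sub_mem _ (taylor_mem_degreeLT.mpr hp) (Submodule.smul_mem _ a hp)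
  have hL : Function.Injective L := by
    refine (injective_iff_map_eq_zero L).mpr fun p hp => ?_
    by_contra hp0
    refine ha (eq_of_smul_taylor_eq_smul (p := (p : K[X])) (r := r) (b := 1)
      (by simpa using hp0) ?_).symm
    simpa [L, sub_eq_zero] using congrArg Subtype.val hp
  have hP : P ∈ K[X]_n :=
    mem_degreeLT.mpr (degree_le_natDegree.trans_lt (by exact_mod_cast P.natDegree.lt_succ_self))
  obtain ⟨p, hp⟩ := LinearMap.injective_iff_surjective.mp hL ⟨P, hP⟩
  exact ⟨p, by simpa [L] using congrArg Subtype.val hp⟩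

end Polynomial

theorem MvPolynomial.evalEval_aeval {R σ : Type*} [CommRing R] (g : σ → R[X][Y])
    (f : MvPolynomial σ R) (x y : R) :
    (aeval g f).evalEval x y = eval (fun i => (g i).evalEval x y) f := by
  rw [← Polynomial.coe_evalEvalRingHom, aeval_def, eval₂_comp_left, eval]
  congr 1
  ext r
  simp

theorem isZariskiClosed_setOf_eval_eq_zero {k : Type*} [Field k] (g : MvPolynomial (Fin 2) k) :
    IsZariskiClosed {p | eval p g = 0} := by
  refine ⟨Ideal.span {g}, Set.ext fun p =>
    ⟨fun hp f hf => ?_, fun hp => hp g (Ideal.mem_span_singleton_self g)⟩⟩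
  obtain ⟨q, rfl⟩ := Ideal.mem_span_singleton'.mp hf
  rw [map_mul, hp, mul_zero]

theorem IsZariskiClosed.mem_of_forall_mem_natCast_pow {k : Type*} [Field k] [CharZero k]
    {S : Set (Fin 2 → k)} (hS : IsZariskiClosed S) {a : k} (ha : Function.Injective (a ^ · : ℕ → k))
    (g : Fin 2 → k[X][Y]) (hg : ∀ n : ℕ, (fun i => (g i).evalEval (n : k) (a ^ n)) ∈ S)
    (x y : k) : (fun i => (g i).evalEval x y) ∈ S := by
  obtain ⟨I, rfl⟩ := hS
  intro f hf
  have : aeval g f = 0 := Polynomial.eq_zero_of_forall_evalEval_natCast_pow ha fun n => by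
    rw [MvPolynomial.evalEval_aeval]; exact hg n f hf
  rw [← MvPolynomial.evalEval_aeval, this, Polynomial.evalEval_zero]

theorem MvPolynomial.eval_polynomial_aeval_X {R σ : Type*} [CommRing R] (p : σ → R) (i : σ)
    (P : Polynomial R) : eval p (Polynomial.aeval (X i) P) = P.eval (p i) := by
  rw [Polynomial.aeval_def, Polynomial.hom_eval₂, eval_X, Polynomial.eval]
  congr 1
  ext
  simp

theorem Units.injective_val_pow {M : Type*} [Monoid M] {a : Mˣ} (ha : ¬IsOfFinOrder a) :
    Function.Injective ((a : M) ^ · : ℕ → M) := fun m n hmn =>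
  injective_pow_iff_not_isOfFinOrder.mpr ha (Units.val_injective (by simpa using hmn))

section TriangularAutomorphism

variable {k : Type*} [Field k] {φ : MvPolynomial (Fin 2) k ≃ₐ[k] MvPolynomial (Fin 2) k}
  {a c : k} {P h : Polynomial k}

theorem pmap_eq (hφx : φ (X 0) = C a * X 0 + Polynomial.aeval (X 1) P)
    (hφy : φ (X 1) = X 1 + C c) (p : Fin 2 → k) :
    pmap φ p = ![a * p 0 + P.eval (p 1), p 1 + c] := by
  ext i
  fin_cases i <;> simp [pmap, hφx, hφy, eval_polynomial_aeval_X]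

theorem iterate_pmap_eq (hφx : φ (X 0) = C a * X 0 + Polynomial.aeval (X 1) P)
    (hφy : φ (X 1) = X 1 + C c) (hh : Polynomial.taylor c h - a • h = P) (p : Fin 2 → k)
    (n : ℕ) : (pmap φ)^[n] p =
      ![(p 0 - h.eval (p 1)) * a ^ n + h.eval (p 1 + n * c), p 1 + n * c] := by
  induction n with
  | zero => ext i; fin_cases i <;> simp
  | succ n ih =>
    rw [Function.iterate_succ_apply', ih, pmap_eq hφx hφy]
    ext i
    fin_cases i
    · simp [add_one_mul, ← add_assoc, Polynomial.eval_add_eq_of_taylor_sub_smul_eq hh]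
      ring
    · simp [add_one_mul, ← add_assoc]

theorem map_sub_aeval_eq (hφx : φ (X 0) = C a * X 0 + Polynomial.aeval (X 1) P)
    (hφy : φ (X 1) = X 1 + C c) (hh : Polynomial.taylor c h - a • h = P) :
    φ (X 0 - Polynomial.aeval (X 1) h) = C a * (X 0 - Polynomial.aeval (X 1) h) := by
  have hshift : φ (Polynomial.aeval (X 1) h) = Polynomial.aeval (X 1) (P + a • h) := by
    rw [← Polynomial.aeval_algHom_apply, ← hh, sub_add_cancel, Polynomial.taylor_apply,
      Polynomial.aeval_comp]
    simp [hφy]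
  rw [map_sub, hφx, hshift, map_add, map_smul, smul_eq_C_mul]
  ring

theorem image_pmap_curve (hφx : φ (X 0) = C a * X 0 + Polynomial.aeval (X 1) P)
    (hφy : φ (X 1) = X 1 + C c) (hh : Polynomial.taylor c h - a • h = P) :
    pmap φ '' {p | p 0 = h.eval (p 1)} = {p | p 0 = h.eval (p 1)} := by
  have heval := Polynomial.eval_add_eq_of_taylor_sub_smul_eq hh
  refine subset_antisymm ?_ fun (q : Fin 2 → k) (hq : q 0 = h.eval (q 1)) => ?_
  · rintro _ ⟨p, hp, rfl⟩
    simp [pmap_eq hφx hφy, heval, hp.symm]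
  · refine ⟨![h.eval (q 1 - c), q 1 - c], by simp, ?_⟩
    ext i
    fin_cases i
    · simpa [pmap_eq hφx hφy, hq] using (heval (q 1 - c)).symm
    · simp [pmap_eq hφx hφy]

theorem mem_of_isZariskiClosed_of_mapsTo [CharZero k]
    (hφx : φ (X 0) = C a * X 0 + Polynomial.aeval (X 1) P)
    (hφy : φ (X 1) = X 1 + C c) (hh : Polynomial.taylor c h - a • h = P)
    (ha : Function.Injective (a ^ · : ℕ → k)) {S : Set (Fin 2 → k)} (hS : IsZariskiClosed S)
    (hSφ : Set.MapsTo (pmap φ) S S) {p : Fin 2 → k} (hp : p ∈ S) (s t : k) :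
    ![(p 0 - h.eval (p 1)) * s + h.eval (p 1 + t * c), p 1 + t * c] ∈ S := by
  let g : Fin 2 → k[X][Y] :=
    ![.C (.C (p 0 - h.eval (p 1))) * .X + .C (h.comp (.C (p 1) + .X * .C c)),
      .C (.C (p 1) + .X * .C c)]
  have hg (x y : k) : (fun i => (g i).evalEval x y) =
      ![(p 0 - h.eval (p 1)) * y + h.eval (p 1 + x * c), p 1 + x * c] := by
    ext i
    fin_cases i <;> simp [g, Polynomial.evalEval_C, Polynomial.eval_comp, mul_comm c]
  have := hS.mem_of_forall_mem_natCast_pow ha g (fun n => by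
    rw [hg, ← iterate_pmap_eq hφx hφy hh]
    exact hSφ.iterate n hp) t s
  rwa [hg] at this

theorem isZariskiClosed_curve (h : Polynomial k) :
    IsZariskiClosed {p : Fin 2 → k | p 0 = h.eval (p 1)} := by
  have hcurve : {p : Fin 2 → k | p 0 = h.eval (p 1)} =
      {p | eval p (X 0 - Polynomial.aeval (X 1) h) = 0} := by
    ext p
    simp [eval_polynomial_aeval_X, sub_eq_zero]
  exact hcurve ▸ isZariskiClosed_setOf_eval_eq_zero _

theorem eq_empty_or_eq_curve_or_eq_univ [CharZero k]
    (hφx : φ (X 0) = C a * X 0 + Polynomial.aeval (X 1) P)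
    (hφy : φ (X 1) = X 1 + C c) (hh : Polynomial.taylor c h - a • h = P) (hc : c ≠ 0)
    (ha : Function.Injective (a ^ · : ℕ → k)) {S : Set (Fin 2 → k)} (hS : IsZariskiClosed S)
    (hSφ : Set.MapsTo (pmap φ) S S) :
    S = ∅ ∨ S = {p | p 0 = h.eval (p 1)} ∨ S = Set.univ := by
  have hmem := fun p (hp : p ∈ S) =>
    mem_of_isZariskiClosed_of_mapsTo hφx hφy hh ha hS hSφ hp
  by_cases hsub : S ⊆ {p | p 0 = h.eval (p 1)}
  · refine S.eq_empty_or_nonempty.imp id fun ⟨p, hp⟩ => Or.inl (subset_antisymm hsub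
      fun (q : Fin 2 → k) (hq : q 0 = h.eval (q 1)) => ?_)
    convert hmem p hp 0 ((q 1 - p 1) / c) using 1
    rw [mul_zero, zero_add, div_mul_cancel₀ _ hc, add_sub_cancel, ← hq]
    exact (FinVec.etaExpand_eq q).symm
  · obtain ⟨p, hp, hpC⟩ := Set.not_subset.mp hsub
    refine Or.inr (Or.inr (Set.eq_univ_of_forall fun q => ?_))
    convert hmem p hp ((q 0 - h.eval (q 1)) / (p 0 - h.eval (p 1))) ((q 1 - p 1) / c) using 1
    rw [mul_div_cancel₀ _ (sub_ne_zero.mpr hpC), div_mul_cancel₀ _ hc, add_sub_cancel,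
      sub_add_cancel]
    exact (FinVec.etaExpand_eq q).symm

end TriangularAutomorphism

theorem stmt18_general {k : Type*} [Field k] [CharZero k]
    (a : kˣ) (ha : ∀ m : ℕ, 0 < m → a ^ m ≠ 1)
    (c : k) (hc : c ≠ 0) (P : Polynomial k)
    (φ : MvPolynomial (Fin 2) k ≃ₐ[k] MvPolynomial (Fin 2) k)
    (hφx : φ (X 0) = C (a : k) * X 0 + Polynomial.aeval (X 1) P)
    (hφy : φ (X 1) = X 1 + C c) :
    ∃ h : Polynomial k,
      φ (X 0 - Polynomial.aeval (X 1) h) = C (a : k) * (X 0 - Polynomial.aeval (X 1) h) ∧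
      IsZariskiClosed {p : Fin 2 → k | p 0 = Polynomial.eval (p 1) h} ∧
      pmap φ '' {p : Fin 2 → k | p 0 = Polynomial.eval (p 1) h} =
        {p : Fin 2 → k | p 0 = Polynomial.eval (p 1) h} ∧
      ({p : Fin 2 → k | p 0 = Polynomial.eval (p 1) h} : Set (Fin 2 → k)) ≠ ∅ ∧
      {p : Fin 2 → k | p 0 = Polynomial.eval (p 1) h} ≠ Set.univ ∧
      ∀ S : Set (Fin 2 → k), IsZariskiClosed S → pmap φ '' S = S →
        S = ∅ ∨ S = {p : Fin 2 → k | p 0 = Polynomial.eval (p 1) h} ∨ S = Set.univ := by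
  have hinj : Function.Injective ((a : k) ^ · : ℕ → k) :=
    Units.injective_val_pow fun hfin =>
      let ⟨m, hm, h1⟩ := isOfFinOrder_iff_pow_eq_one.mp hfin
      ha m hm h1
  obtain ⟨h, hh⟩ := Polynomial.exists_taylor_sub_smul_eq (a := (a : k))
    (fun h1 => zero_ne_one (hinj (show (a : k) ^ 0 = (a : k) ^ 1 by simp [h1]))) c P
  refine ⟨h, map_sub_aeval_eq hφx hφy hh, isZariskiClosed_curve h, image_pmap_curve hφx hφy hh,
    Set.nonempty_iff_ne_empty.mp ⟨![h.eval 0, 0], by simp⟩, fun hu => ?_,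
    fun S hS hSφ => eq_empty_or_eq_curve_or_eq_univ hφx hφy hh hc hinj hS
      fun p hp => hSφ ▸ Set.mem_image_of_mem _ hp⟩
  have := hu.symm ▸ Set.mem_univ (![h.eval 0 + 1, 0] : Fin 2 → k)
  simp at this

theorem stmt18 {k : Type*} [Field k] [IsAlgClosed k] [CharZero k]
    (a : kˣ) (ha : ∀ m : ℕ, 0 < m → a ^ m ≠ 1)
    (c : k) (hc : c ≠ 0) (P : Polynomial k)
    (φ : MvPolynomial (Fin 2) k ≃ₐ[k] MvPolynomial (Fin 2) k)
    (hφx : φ (X 0) = C (a : k) * X 0 + Polynomial.aeval (X 1) P)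
    (hφy : φ (X 1) = X 1 + C c) :
    ∃ h : Polynomial k,
      φ (X 0 - Polynomial.aeval (X 1) h) = C (a : k) * (X 0 - Polynomial.aeval (X 1) h) ∧
      IsZariskiClosed {p : Fin 2 → k | p 0 = Polynomial.eval (p 1) h} ∧
      pmap φ '' {p : Fin 2 → k | p 0 = Polynomial.eval (p 1) h} =
        {p : Fin 2 → k | p 0 = Polynomial.eval (p 1) h} ∧
      ({p : Fin 2 → k | p 0 = Polynomial.eval (p 1) h} : Set (Fin 2 → k)) ≠ ∅ ∧
      {p : Fin 2 → k | p 0 = Polynomial.eval (p 1) h} ≠ Set.univ ∧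
      ∀ S : Set (Fin 2 → k), IsZariskiClosed S → pmap φ '' S = S →
        S = ∅ ∨ S = {p : Fin 2 → k | p 0 = Polynomial.eval (p 1) h} ∨ S = Set.univ :=
  stmt18_general a ha c hc P φ hφx hφy
end
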